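/- arXiv:2107.01517 — 4 statements merged into one kernel-verified Lean document; each statement's English description precedes it below -/
import Mathlib

section
/- The function ψ̃(r) = (1-β-r)·(⌊ψ(r)⌋ + (ψ(r) - ⌊ψ(r)⌋)^α) satisfies ψ̃(r) > r + β for all r ∈ (0, 1-β), and ψ̃(r) → ∞ as r → (1-β)⁻. -/
/-!
Put `s = 1 - β - r`, `C = (1 - β)^(1/α) + β^(1/α)` and `x = ψ(r) + 1 = C s^(-1/α)`, and let
`φ(x) = ⌊x⌋ + {x}^α`. Then `ψ̃(r) + s = s φ(x) = C^α · φ(x) / x^α`. The quotient `φ(x) / x^α` is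
strictly increasing on `[1, ∞)`: on each `[n, n + 1]` because `u^(α-1) > 1` for `0 < u < 1`, and
across integers because it takes the increasing values `n^(1-α)` there. So `s φ(x)` decreases in
`s`, and at `s = 1 - β` (where `x = 1 + (β/(1-β))^(1/α)`) it equals `1`; this gives
`ψ̃(r) > 1 - s = r + β`. For the limit, `φ(x) ≥ x - 1` gives `ψ̃(r) ≥ C s^(1-1/α) - 2s → ∞`.
-/

open Real Filter Set Topology

/-- The paper's `ψ̃(r)` is `(1 - β - r) * floorFractRpow α (ψ r)`. -/
noncomputable def floorFractRpow (α x : ℝ) : ℝ := ⌊x⌋ + Int.fract x ^ α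

lemma floorFractRpow_sub_one (α x : ℝ) : floorFractRpow α (x - 1) = floorFractRpow α x - 1 := by
  simp only [floorFractRpow, Int.floor_sub_one, Int.fract_sub_one]
  push_cast
  ring

lemma sub_one_le_floorFractRpow (α x : ℝ) : x - 1 ≤ floorFractRpow α x := by
  have := Int.sub_one_lt_floor x
  have := rpow_nonneg (Int.fract_nonneg x) α
  unfold floorFractRpow
  linarith

lemma floorFractRpow_one_add {α θ : ℝ} (hθ0 : 0 ≤ θ) (hθ1 : θ < 1) :
    floorFractRpow α (1 + θ) = 1 + θ ^ α := by
  have hfloor : ⌊1 + θ⌋ = 1 := Int.floor_eq_iff.2 ⟨by push_cast; linarith, by push_cast; linarith⟩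
  rw [floorFractRpow, Int.fract, hfloor]
  push_cast
  ring_nf

lemma strictMonoOn_add_rpow_div_add_rpow {α m : ℝ} (hα0 : 0 < α) (hα1 : α < 1) (hm : 0 < m) :
    StrictMonoOn (fun u : ℝ => (m + u ^ α) / (m + u) ^ α) (Icc 0 1) := by
  have hnum : ∀ u ∈ Icc (0 : ℝ) 1, 0 < m + u ^ α := fun u hu => by
    have := rpow_nonneg hu.1 α
    linarith
  have hden : ∀ u ∈ Icc (0 : ℝ) 1, 0 < m + u := fun u hu => by linarith [hu.1]
  set L : ℝ → ℝ := fun u => log (m + u ^ α) - α * log (m + u)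
  have hL : StrictMonoOn L (Icc 0 1) := by
    refine strictMonoOn_of_deriv_pos (convex_Icc 0 1) ?_ fun u hu => ?_
    · have hcont : Continuous fun u : ℝ => m + u ^ α :=
        continuous_const.add (continuous_rpow_const hα0.le)
      exact (hcont.continuousOn.log fun u hu => (hnum u hu).ne').sub
        (continuousOn_const.mul (ContinuousOn.log (by fun_prop) fun u hu => (hden u hu).ne'))
    rw [interior_Icc] at hu
    have hu' : u ∈ Icc (0 : ℝ) 1 := Ioo_subset_Icc_self hu
    have hderiv : HasDerivAt L (α * u ^ (α - 1) / (m + u ^ α) - α * (1 / (m + u))) u :=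
      (((hasDerivAt_rpow_const (Or.inl hu.1.ne')).const_add m).log (hnum u hu').ne').sub
        ((((hasDerivAt_id u).const_add m).log (hden u hu').ne').const_mul α)
    rw [hderiv.deriv, sub_pos, mul_one_div, div_lt_div_iff₀ (hden u hu') (hnum u hu')]
    have hpow : 1 < u ^ (α - 1) := one_lt_rpow_of_pos_of_lt_one_of_neg hu.1 hu.2 (by linarith)
    have hpow_mul : u ^ (α - 1) * u = u ^ α := by
      rw [← rpow_add_one hu.1.ne', sub_add_cancel]
    nlinarith [mul_lt_mul_of_pos_left hpow (mul_pos hα0 hm)]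
  refine (exp_strictMono.comp_strictMonoOn hL).congr fun u hu => ?_
  simp only [Function.comp, L, exp_sub, exp_log (hnum u hu), rpow_def_of_pos (hden u hu),
    mul_comm α]

lemma strictMonoOn_floorFractRpow_div_rpow {α : ℝ} (hα0 : 0 < α) (hα1 : α < 1) :
    StrictMonoOn (fun x : ℝ => floorFractRpow α x / x ^ α) (Ici 1) := by
  intro y hy x hx hyx
  simp only [mem_Ici] at hx hy
  have hrepr : ∀ z : ℝ, floorFractRpow α z / z ^ α =
      ((⌊z⌋ : ℝ) + Int.fract z ^ α) / ((⌊z⌋ : ℝ) + Int.fract z) ^ α := fun z => by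
    rw [Int.floor_add_fract]; rfl
  have hfloor : ∀ z : ℝ, 1 ≤ z → (1 : ℝ) ≤ ⌊z⌋ := fun z hz => by
    exact_mod_cast Int.le_floor.2 (by simpa using hz)
  have hfract : ∀ z : ℝ, Int.fract z ∈ Icc (0 : ℝ) 1 :=
    fun z => ⟨Int.fract_nonneg z, (Int.fract_lt_one z).le⟩
  have hmono : ∀ z : ℝ, 1 ≤ z →
      StrictMonoOn (fun u : ℝ => ((⌊z⌋ : ℝ) + u ^ α) / ((⌊z⌋ : ℝ) + u) ^ α) (Icc 0 1) :=
    fun z hz => strictMonoOn_add_rpow_div_add_rpow hα0 hα1 (by linarith [hfloor z hz])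
  show floorFractRpow α y / y ^ α < floorFractRpow α x / x ^ α
  rw [hrepr y, hrepr x]
  rcases (Int.floor_mono hyx.le).eq_or_lt with heq | hlt
  · rw [heq]
    refine hmono x hx (hfract y) (hfract x) ?_
    unfold Int.fract
    rw [heq]
    linarith
  have hself : ∀ t : ℝ, 0 < t → t / t ^ α = t ^ (1 - α) := fun t ht => by
    rw [rpow_sub ht, rpow_one]
  have hstep : (⌊y⌋ : ℝ) + 1 ≤ ⌊x⌋ := by exact_mod_cast Int.add_one_le_of_lt hlt
  calc ((⌊y⌋ : ℝ) + Int.fract y ^ α) / ((⌊y⌋ : ℝ) + Int.fract y) ^ α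
      < ((⌊y⌋ : ℝ) + 1 ^ α) / ((⌊y⌋ : ℝ) + 1) ^ α :=
        hmono y hy (hfract y) ⟨zero_le_one, le_rfl⟩ (Int.fract_lt_one y)
    _ = ((⌊y⌋ : ℝ) + 1) ^ (1 - α) := by rw [one_rpow, hself _ (by linarith [hfloor y hy])]
    _ ≤ (⌊x⌋ : ℝ) ^ (1 - α) := rpow_le_rpow (by linarith [hfloor y hy]) hstep (by linarith)
    _ = ((⌊x⌋ : ℝ) + 0 ^ α) / ((⌊x⌋ : ℝ) + 0) ^ α := by
        rw [zero_rpow hα0.ne', add_zero, hself _ (by linarith [hfloor x hx])]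
    _ ≤ ((⌊x⌋ : ℝ) + Int.fract x ^ α) / ((⌊x⌋ : ℝ) + Int.fract x) ^ α :=
        (hmono x hx).monotoneOn ⟨le_rfl, zero_le_one⟩ (hfract x) (Int.fract_nonneg x)

lemma div_rpow_one_div_rpow {α C u : ℝ} (hα : α ≠ 0) (hC : 0 ≤ C) (hu : 0 ≤ u) :
    (C / u ^ (1 / α)) ^ α = C ^ α / u := by
  rw [div_rpow hC (rpow_nonneg hu _), one_div, rpow_inv_rpow hu hα]

lemma mul_floorFractRpow_div_rpow_lt {α C s t : ℝ} (hα0 : 0 < α) (hα1 : α < 1) (hC : 0 < C)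
    (hs : 0 < s) (hst : s < t) (ht : 1 ≤ C / t ^ (1 / α)) :
    t * floorFractRpow α (C / t ^ (1 / α)) < s * floorFractRpow α (C / s ^ (1 / α)) := by
  have hident : ∀ u : ℝ, 0 < u → u * floorFractRpow α (C / u ^ (1 / α)) =
      C ^ α * (floorFractRpow α (C / u ^ (1 / α)) / (C / u ^ (1 / α)) ^ α) := fun u hu => by
    rw [div_rpow_one_div_rpow hα0.ne' hC.le hu.le]
    field_simp
  have hlt : C / t ^ (1 / α) < C / s ^ (1 / α) :=
    div_lt_div_of_pos_left hC (rpow_pos_of_pos hs _) (rpow_lt_rpow hs.le hst (by positivity))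
  rw [hident t (hs.trans hst), hident s hs]
  exact mul_lt_mul_of_pos_left
    (strictMonoOn_floorFractRpow_div_rpow hα0 hα1 ht (ht.trans hlt.le) hlt) (rpow_pos_of_pos hC α)

lemma one_sub_mul_floorFractRpow_eq_one {α β : ℝ} (hα0 : 0 < α) (hβ0 : 0 ≤ β)
    (hβ1 : β < 1 / 2) :
    (1 - β) * floorFractRpow α (((1 - β) ^ (1 / α) + β ^ (1 / α)) / (1 - β) ^ (1 / α)) = 1 := by
  have hβ' : 0 < 1 - β := by linarith
  have hratio : 0 ≤ β / (1 - β) := div_nonneg hβ0 hβ'.le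
  have hθ : ((1 - β) ^ (1 / α) + β ^ (1 / α)) / (1 - β) ^ (1 / α) =
      1 + (β / (1 - β)) ^ (1 / α) := by
    rw [add_div, div_self (rpow_pos_of_pos hβ' _).ne', div_rpow hβ0 hβ'.le]
  have hθ1 : (β / (1 - β)) ^ (1 / α) < 1 :=
    rpow_lt_one hratio ((div_lt_one hβ').2 (by linarith)) (by positivity)
  rw [hθ, floorFractRpow_one_add (rpow_nonneg hratio _) hθ1, one_div,
    rpow_inv_rpow hratio hα0.ne']
  field_simp
  ring

lemma tendsto_mul_floorFractRpow_div_rpow_sub_one {α C : ℝ} (hα0 : 0 < α) (hα1 : α < 1)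
    (hC : 0 < C) :
    Tendsto (fun s : ℝ => s * floorFractRpow α (C / s ^ (1 / α) - 1)) (𝓝[>] 0) atTop := by
  have hexp : 1 - 1 / α < 0 := by linarith [one_lt_one_div hα0 hα1]
  have hlin : Tendsto (fun s : ℝ => -(2 * s)) (𝓝[>] 0) (𝓝 0) :=
    ((continuous_const.mul continuous_id).neg.tendsto' 0 0 (by simp)).mono_left nhdsWithin_le_nhds
  have hlow := ((tendsto_rpow_neg_nhdsGT_zero hexp).const_mul_atTop hC).atTop_add hlin
  refine tendsto_atTop_mono' _ ?_ hlow
  filter_upwards [self_mem_nhdsWithin] with s (hs : 0 < s)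
  calc C * s ^ (1 - 1 / α) + -(2 * s) = s * (C / s ^ (1 / α) - 1 - 1) := by
        rw [rpow_sub hs, rpow_one]
        field_simp
        ring
    _ ≤ s * floorFractRpow α (C / s ^ (1 / α) - 1) :=
        mul_le_mul_of_nonneg_left (sub_one_le_floorFractRpow _ _) hs.le

/-- The function `ψ̃(r) = (1-β-r)(⌊ψ(r)⌋ + (ψ(r) - ⌊ψ(r)⌋)^α)` satisfies
`ψ̃(r) > r + β` on `(0, 1-β)` and tends to infinity as `r → (1-β)⁻`. -/
theorem stmt2 (α β : ℝ) (hα0 : 0 < α) (hα1 : α < 1) (hβ0 : 0 < β) (hβ1 : β < 1 / 2)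
    (ψ ψt : ℝ → ℝ)
    (hψ : ∀ r, ψ r = ((1 - β) ^ (1 / α) + β ^ (1 / α)) / (1 - β - r) ^ (1 / α) - 1)
    (hψt : ∀ r, ψt r = (1 - β - r) * ((⌊ψ r⌋ : ℝ) + (ψ r - (⌊ψ r⌋ : ℝ)) ^ α)) :
    (∀ r ∈ Set.Ioo (0 : ℝ) (1 - β), r + β < ψt r) ∧
    Tendsto ψt (nhdsWithin (1 - β) (Set.Iio (1 - β))) atTop := by
  set C := (1 - β) ^ (1 / α) + β ^ (1 / α)
  have hβ' : 0 < 1 - β := by linarith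
  have hC0 : 0 < C := by positivity
  have hψt' : ∀ r, ψt r = (1 - β - r) * floorFractRpow α (C / (1 - β - r) ^ (1 / α) - 1) :=
    fun r => by rw [hψt, hψ]; rfl
  refine ⟨fun r hr => ?_, ?_⟩
  · have hstart : 1 ≤ C / (1 - β) ^ (1 / α) :=
      (one_le_div₀ (by positivity)).2 (le_add_of_nonneg_right (by positivity))
    have hlt := mul_floorFractRpow_div_rpow_lt hα0 hα1 hC0 (s := 1 - β - r)
      (by linarith [hr.2]) (by linarith [hr.1]) hstart
    rw [one_sub_mul_floorFractRpow_eq_one hα0 hβ0.le hβ1] at hlt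
    rw [hψt', floorFractRpow_sub_one, mul_sub_one]
    linarith
  · have hs : Tendsto (fun r => 1 - β - r) (𝓝[<] (1 - β)) (𝓝[>] 0) := by
      have := (Filter.map_subLeft_nhdsLT (c := 1 - β) (a := 1 - β)).le
      rwa [sub_self] at this
    exact ((tendsto_mul_floorFractRpow_div_rpow_sub_one hα0 hα1 hC0).comp hs).congr
      fun r => (hψt' r).symm
end

section
/- With H̄(x) = exp{-∫₁^x du/(u^{1-α}L_α(u))}, 0 < α < 1, L_α slowly varying, let G(x) = (1/(γH̄))^←(x) and define 𝓛(x) = x^{-1/α}·(∫₁^· du/(u^{1-α}L_α(u)))^←(x). Then 𝓛 is slowly varying, G(x) ~ (log x)^{1/α} 𝓛(log x) as x → ∞, and h(G(x)) ~ α^{-1}(log x)^{1/α - 1} 𝓛(log x) as x → ∞, where h(u) = u^{1-α}L_α(u). -/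
open Real Filter MeasureTheory

/-- Cesàro-type averaging lemma: if `f → c` and `∫₁^y w → ∞` with `w ≥ 0`, then
`(∫₁^y f·w)/(∫₁^y w) → c`. -/
lemma my_cesaro {w f : ℝ → ℝ} {c : ℝ}
    (hw : ∀ u, 1 ≤ u → ContinuousAt w u) (hwpos : ∀ u, 1 ≤ u → 0 ≤ w u)
    (hf : ∀ u, 1 ≤ u → ContinuousAt f u)
    (hfc : Tendsto f atTop (nhds c))
    (hW : Tendsto (fun y => ∫ u in (1:ℝ)..y, w u) atTop atTop) :
    Tendsto (fun y => (∫ u in (1:ℝ)..y, f u * w u) / (∫ u in (1:ℝ)..y, w u))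
      atTop (nhds c) := by
  have hwc : ∀ a b : ℝ, 1 ≤ a → IntervalIntegrable w volume a b ∨ True := fun _ _ _ => Or.inr trivial
  -- integrability helper
  have hInt : ∀ (g : ℝ → ℝ), (∀ u, 1 ≤ u → ContinuousAt g u) → ∀ a b : ℝ, 1 ≤ a → 1 ≤ b →
      IntervalIntegrable g volume a b := by
    intro g hg a b ha hb
    apply ContinuousOn.intervalIntegrable
    intro u hu
    have h1 : (1:ℝ) ≤ u := le_trans (le_min ha hb) (Set.mem_uIcc.mp hu |>.elim
      (fun h => le_trans (min_le_left a b) h.1) (fun h => le_trans (min_le_right a b) h.1))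
    exact (hg u h1).continuousWithinAt
  rw [Metric.tendsto_nhds]
  intro ε hε
  obtain ⟨T0, hT0⟩ := (Metric.tendsto_nhds.mp hfc (ε/2) (by positivity)).exists_forall_of_atTop
  set T : ℝ := max T0 1 with hT
  have hT1 : (1:ℝ) ≤ T := le_max_right _ _
  set A : ℝ := |(∫ u in (1:ℝ)..T, f u * w u) - c * ∫ u in (1:ℝ)..T, w u| with hA
  have hA0 : 0 ≤ A := abs_nonneg _
  have hev : ∀ᶠ y in atTop, (2*(A+1)/ε ≤ ∫ u in (1:ℝ)..y, w u) ∧ T ≤ y :=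
    (hW.eventually_ge_atTop _).and (eventually_ge_atTop T)
  filter_upwards [hev] with y hy
  obtain ⟨hD, hTy⟩ := hy
  have hy1 : (1:ℝ) ≤ y := le_trans hT1 hTy
  set D : ℝ := ∫ u in (1:ℝ)..y, w u with hDdef
  set N : ℝ := ∫ u in (1:ℝ)..y, f u * w u with hNdef
  have hDpos : 0 < D := lt_of_lt_of_le (by positivity) hD
  have i1 : IntervalIntegrable w volume 1 T := hInt w hw 1 T le_rfl hT1
  have i2 : IntervalIntegrable w volume T y := hInt w hw T y hT1 hy1
  have i3 : IntervalIntegrable (fun u => f u * w u) volume 1 T := by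
    apply hInt _ (fun u hu => (hf u hu).mul (hw u hu)) 1 T le_rfl hT1
  have i4 : IntervalIntegrable (fun u => f u * w u) volume T y := by
    apply hInt _ (fun u hu => (hf u hu).mul (hw u hu)) T y hT1 hy1
  have split1 : N = (∫ u in (1:ℝ)..T, f u * w u) + ∫ u in T..y, f u * w u :=
    (intervalIntegral.integral_add_adjacent_intervals i3 i4).symm
  have split2 : D = (∫ u in (1:ℝ)..T, w u) + ∫ u in T..y, w u :=
    (intervalIntegral.integral_add_adjacent_intervals i1 i2).symm
  -- bound the tail
  have htail : |(∫ u in T..y, f u * w u) - c * ∫ u in T..y, w u| ≤ ε/2 * D := by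
    have h1 : (∫ u in T..y, f u * w u) - c * ∫ u in T..y, w u
        = ∫ u in T..y, (f u - c) * w u := by
      rw [← intervalIntegral.integral_const_mul]
      rw [← intervalIntegral.integral_sub i4 (by
        apply hInt _ (fun u hu => continuousAt_const.mul (hw u hu)) T y hT1 hy1)]
      congr 1; ext u; ring
    rw [h1]
    calc |∫ u in T..y, (f u - c) * w u| ≤ ∫ u in T..y, |(f u - c) * w u| :=
          intervalIntegral.abs_integral_le_integral_abs hTy
      _ ≤ ∫ u in T..y, ε/2 * w u := by
          apply intervalIntegral.integral_mono_on hTy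
          · apply IntervalIntegrable.abs
            apply hInt _ (fun u hu => ((hf u hu).sub continuousAt_const).mul (hw u hu)) T y hT1 hy1
          · exact (hInt w hw T y hT1 hy1).const_mul _
          · intro u hu
            rw [abs_mul, abs_of_nonneg (hwpos u (le_trans hT1 hu.1))]
            apply mul_le_mul_of_nonneg_right _ (hwpos u (le_trans hT1 hu.1))
            have := hT0 u (le_trans (le_max_left T0 1) hu.1)
            rw [Real.dist_eq] at this
            exact le_of_lt this
      _ = ε/2 * ∫ u in T..y, w u := intervalIntegral.integral_const_mul _ _
      _ ≤ ε/2 * D := by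
          apply mul_le_mul_of_nonneg_left _ (by positivity)
          rw [split2]
          have : 0 ≤ ∫ u in (1:ℝ)..T, w u := by
            apply intervalIntegral.integral_nonneg hT1
            intro u hu; exact hwpos u hu.1
          linarith
  have hND : |N - c * D| ≤ A + ε/2 * D := by
    have : N - c * D = ((∫ u in (1:ℝ)..T, f u * w u) - c * ∫ u in (1:ℝ)..T, w u)
        + ((∫ u in T..y, f u * w u) - c * ∫ u in T..y, w u) := by
      rw [split1, split2]; ring
    rw [this]
    exact le_trans (abs_add_le _ _) (by rw [← hA]; exact add_le_add le_rfl htail)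
  rw [Real.dist_eq]
  have heq0 : N / D - c = (N - c * D) / D := by field_simp
  rw [heq0, abs_div, abs_of_pos hDpos]
  have hAD : A / D < ε/2 := by
    have h2 : A / D ≤ A / (2*(A+1)/ε) :=
      div_le_div_of_nonneg_left hA0 (by positivity) hD
    have h3 : A / (2*(A+1)/ε) < ε/2 := by
      rw [div_lt_iff₀ (by positivity)]
      have hh : ε / 2 * (2*(A+1)/ε) = A + 1 := by field_simp
      rw [hh]; linarith
    linarith
  have h4 : |N - c * D| / D ≤ (A + ε/2 * D) / D := by gcongr
  have h5 : (A + ε/2 * D) / D = A / D + ε/2 := by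
    rw [add_div, mul_div_assoc, div_self (ne_of_gt hDpos), mul_one]
  rw [h5] at h4
  linarith


lemma karamata_main (α : ℝ) (hα0 : 0 < α) (hα1 : α < 1) (L : ℝ → ℝ)
    (hLpos : ∀ x, 1 ≤ x → 0 < L x) (hLcont : Continuous L)
    (hLsv : ∀ t : ℝ, 0 < t → Tendsto (fun x => L (t * x) / L x) atTop (nhds 1))
    (q : ℝ → ℝ)
    (hq : ∀ x, 1 ≤ x → q x = ∫ u in (1 : ℝ)..x, 1 / (u ^ (1 - α) * L u))
    (hqtop : Tendsto q atTop atTop) :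
    (∀ a b : ℝ, 1 ≤ a → a < b → q a < q b) ∧ (∀ y : ℝ, 1 < y → 0 < q y) ∧
    (∀ l : ℝ, 0 < l → Tendsto (fun y => q (l * y) / q y) atTop (nhds (l ^ α))) ∧
    Tendsto (fun y => y * (1 / (y ^ (1-α) * L y)) / q y) atTop (nhds α) := by
  set w : ℝ → ℝ := fun u => 1 / (u ^ (1-α) * L u) with hw
  have hwca : ∀ u, 1 ≤ u → ContinuousAt w u := by
    intro u hu
    have h1 : ContinuousAt (fun u : ℝ => u ^ (1-α)) u :=
      Real.continuousAt_rpow_const u (1-α) (Or.inl (by linarith))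
    exact continuousAt_const.div (h1.mul hLcont.continuousAt) (by
      have := hLpos u hu; positivity)
  have hwpos : ∀ u, 1 ≤ u → 0 < w u := by
    intro u hu
    have h1 := hLpos u hu
    have h2 : 0 < u ^ (1-α) := Real.rpow_pos_of_pos (by linarith) _
    simp only [hw]
    positivity
  have hwm : Measurable w :=
    measurable_const.div
      (((Real.continuous_rpow_const (by linarith : (0:ℝ) ≤ 1-α)).mul hLcont).measurable)
  have hInt : ∀ a b : ℝ, 1 ≤ a → 1 ≤ b → IntervalIntegrable w volume a b := by
    intro a b ha hb
    apply ContinuousOn.intervalIntegrable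
    intro u hu
    have h1 : (1:ℝ) ≤ u := le_trans (le_min ha hb) (Set.mem_uIcc.mp hu |>.elim
      (fun h => le_trans (min_le_left a b) h.1) (fun h => le_trans (min_le_right a b) h.1))
    exact (hwca u h1).continuousWithinAt
  have hqsplit : ∀ a b : ℝ, 1 ≤ a → a ≤ b → q b = q a + ∫ u in a..b, w u := by
    intro a b ha hab
    rw [hq a ha, hq b (le_trans ha hab)]
    exact (intervalIntegral.integral_add_adjacent_intervals (hInt 1 a le_rfl ha)
      (hInt a b ha (le_trans ha hab))).symm
  have hqmono : ∀ a b : ℝ, 1 ≤ a → a ≤ b → q a ≤ q b := by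
    intro a b ha hab
    rw [hqsplit a b ha hab]
    have : 0 ≤ ∫ u in a..b, w u :=
      intervalIntegral.integral_nonneg hab (fun u hu => le_of_lt (hwpos u (le_trans ha hu.1)))
    linarith
  have hqstrict : ∀ a b : ℝ, 1 ≤ a → a < b → q a < q b := by
    intro a b ha hab
    rw [hqsplit a b ha hab.le]
    have : 0 < ∫ u in a..b, w u :=
      intervalIntegral.intervalIntegral_pos_of_pos_on (hInt a b ha (by linarith))
        (fun u hu => hwpos u (le_trans ha hu.1.le)) hab
    linarith
  have hqpos : ∀ y : ℝ, 1 < y → 0 < q y := by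
    intro y hy
    rw [hq y (le_of_lt hy)]
    apply intervalIntegral.intervalIntegral_pos_of_pos_on (hInt 1 y le_rfl (le_of_lt hy))
      (fun u hu => hwpos u (le_of_lt hu.1)) hy
  -- regular variation of q, l ≥ 1
  have hWtop : Tendsto (fun y => ∫ u in (1:ℝ)..y, w u) atTop atTop := by
    apply hqtop.congr'
    filter_upwards [eventually_ge_atTop (1:ℝ)] with y hy
    exact hq y hy
  have hkey : ∀ l : ℝ, 1 ≤ l → ∀ u : ℝ, 1 ≤ u → l * w (l * u) / w u = l ^ α * (L u / L (l * u)) := by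
    intro l hl u hu
    have hl0 : (0:ℝ) < l := by linarith
    have hu0 : (0:ℝ) < u := by linarith
    have hlu1 : (1:ℝ) ≤ l * u := by nlinarith
    have hLu := hLpos u hu
    have hLlu := hLpos (l*u) hlu1
    have hup : (0:ℝ) < u ^ (1-α) := Real.rpow_pos_of_pos hu0 _
    have hlp : (0:ℝ) < l ^ (1-α) := Real.rpow_pos_of_pos hl0 _
    have hll : l ^ (1-α) * l ^ α = l := by
      rw [← Real.rpow_add hl0]; norm_num
    have e1 : w (l*u) = 1/((l^(1-α) * u^(1-α)) * L (l*u)) := by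
      simp only [hw]; rw [Real.mul_rpow hl0.le hu0.le]
    have e2 : w u = 1/(u^(1-α) * L u) := rfl
    rw [e1, e2]
    field_simp
    linear_combination (-1 : ℝ) * hll
  have hrv1 : ∀ l : ℝ, 1 ≤ l → Tendsto (fun y => q (l * y) / q y) atTop (nhds (l ^ α)) := by
    intro l hl
    have hl0 : (0:ℝ) < l := by linarith
    have hfc : Tendsto (fun u => l * w (l * u) / w u) atTop (nhds (l ^ α)) := by
      have h1 : Tendsto (fun u => L u / L (l * u)) atTop (nhds 1) := by
        have h2 := (hLsv l hl0).inv₀ one_ne_zero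
        simp only [inv_one] at h2
        exact h2.congr (fun u => by rw [inv_div])
      have h3 : Tendsto (fun u => l ^ α * (L u / L (l * u))) atTop (nhds (l ^ α)) := by
        simpa using tendsto_const_nhds.mul h1
      apply h3.congr'
      filter_upwards [eventually_ge_atTop (1:ℝ)] with u hu
      exact (hkey l hl u hu).symm
    have C := my_cesaro hwca (fun u hu => (hwpos u hu).le)
      (f := fun u => l * w (l * u) / w u) ?_ hfc hWtop
    swap
    · intro u hu
      have hlu1 : (1:ℝ) ≤ l * u := by nlinarith
      have hwlu : ContinuousAt (fun u => w (l * u)) u :=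
        (hwca (l*u) hlu1).comp (continuousAt_const.mul continuousAt_id)
      exact (continuousAt_const.mul hwlu).div (hwca u hu) (ne_of_gt (hwpos u hu))
    have hq0 : Tendsto (fun y => q l / q y) atTop (nhds 0) :=
      tendsto_const_nhds.div_atTop hqtop
    have hsum := C.add hq0
    rw [add_zero] at hsum
    apply hsum.congr'
    filter_upwards [eventually_gt_atTop (1:ℝ)] with y hy
    have hy1 : (1:ℝ) ≤ y := hy.le
    have hqy := hqpos y hy
    have hI1 : (∫ u in (1:ℝ)..y, (l * w (l * u) / w u) * w u) = ∫ u in (1:ℝ)..y, l * w (l * u) := by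
      apply intervalIntegral.integral_congr
      intro u hu
      have hu1 : (1:ℝ) ≤ u := by
        rw [Set.uIcc_of_le hy1] at hu
        exact hu.1
      show (l * w (l * u) / w u) * w u = l * w (l * u)
      rw [div_mul_cancel₀ _ (ne_of_gt (hwpos u hu1))]
    have hI2 : (∫ u in (1:ℝ)..y, l * w (l * u)) = q (l * y) - q l := by
      rw [intervalIntegral.integral_const_mul, intervalIntegral.integral_comp_mul_left w (ne_of_gt hl0)]
      rw [smul_eq_mul, ← mul_assoc, mul_inv_cancel₀ (ne_of_gt hl0), one_mul, mul_one]
      have := hqsplit l (l * y) hl (by nlinarith)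
      linarith
    have hI3 : (∫ u in (1:ℝ)..y, w u) = q y := (hq y hy1).symm
    rw [hI1, hI2, hI3]
    field_simp
    ring
  
  have hfclem : ∀ l : ℝ, 1 ≤ l → Tendsto (fun u => l * w (l * u) / w u) atTop (nhds (l ^ α)) := by
    intro l hl
    have hl0 : (0:ℝ) < l := by linarith
    have h1 : Tendsto (fun u => L u / L (l * u)) atTop (nhds 1) := by
      have h2 := (hLsv l hl0).inv₀ one_ne_zero
      simp only [inv_one] at h2
      exact h2.congr (fun u => by rw [inv_div])
    have h3 : Tendsto (fun u => l ^ α * (L u / L (l * u))) atTop (nhds (l ^ α)) := by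
      simpa using tendsto_const_nhds.mul h1
    apply h3.congr'
    filter_upwards [eventually_ge_atTop (1:ℝ)] with u hu
    exact (hkey l hl u hu).symm
  have hrv : ∀ l : ℝ, 0 < l → Tendsto (fun y => q (l * y) / q y) atTop (nhds (l ^ α)) := by
    intro l hl0
    rcases le_or_gt 1 l with hl | hl
    · exact hrv1 l hl
    · have hm1 : (1:ℝ) ≤ l⁻¹ := one_le_inv_iff₀.mpr ⟨hl0, hl.le⟩
      have hT := hrv1 l⁻¹ hm1
      have hly : Tendsto (fun y : ℝ => l * y) atTop atTop :=
        Tendsto.const_mul_atTop hl0 tendsto_id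
      have hcomp := (hT.comp hly).inv₀ (ne_of_gt (Real.rpow_pos_of_pos (by positivity) α))
      have hval : (((l⁻¹ : ℝ) ^ α)⁻¹) = l ^ α := by
        rw [Real.inv_rpow hl0.le, inv_inv]
      rw [hval] at hcomp
      apply hcomp.congr
      intro y
      show (q (l⁻¹ * (l * y)) / q (l * y))⁻¹ = q (l * y) / q y
      rw [show l⁻¹ * (l * y) = y by field_simp, inv_div]
  have hwr : ∀ l : ℝ, 1 ≤ l → Tendsto (fun u => w (l * u) / w u) atTop (nhds (l ^ (α - 1))) := by
    intro l hl
    have hl0 : (0:ℝ) < l := by linarith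
    have h1 := (tendsto_const_nhds (x := l⁻¹) (f := atTop)).mul (hfclem l hl)
    have h2 : l⁻¹ * l ^ α = l ^ (α - 1) := by
      rw [Real.rpow_sub hl0, Real.rpow_one, div_eq_inv_mul]
    rw [h2] at h1
    apply h1.congr
    intro u
    field_simp
  -- the function g
  set g : ℝ → ℝ := fun t => Real.exp t * w (Real.exp t) / q (Real.exp t) with hg
  have hexp1 : ∀ t : ℝ, 0 < t → 1 < Real.exp t := by
    intro t ht
    rw [← Real.exp_zero]
    exact Real.exp_lt_exp.mpr ht
  have hgpos : ∀ t : ℝ, 0 < t → 0 < g t := by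
    intro t ht
    have h1 := hexp1 t ht
    have h2 := hwpos _ h1.le
    have h3 := hqpos _ h1
    have h4 := Real.exp_pos t
    simp only [hg]
    positivity
  have hqderiv : ∀ y : ℝ, 1 < y → HasDerivAt q (w y) y := by
    intro y hy
    have h1 : HasDerivAt (fun u => ∫ x in (1:ℝ)..u, w x) (w y) y :=
      intervalIntegral.integral_hasDerivAt_right (hInt 1 y le_rfl hy.le)
        hwm.stronglyMeasurable.stronglyMeasurableAtFilter (hwca y hy.le)
    apply h1.congr_of_eventuallyEq
    filter_upwards [eventually_gt_nhds hy] with u hu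
    exact hq u hu.le
  have hqcont : ∀ y : ℝ, 1 < y → ContinuousAt q y := fun y hy => (hqderiv y hy).continuousAt
  have hgca : ∀ t : ℝ, 0 < t → ContinuousAt g t := by
    intro t ht
    have he : ContinuousAt Real.exp t := Real.continuous_exp.continuousAt
    have h1 : 1 < Real.exp t := hexp1 t ht
    exact (he.mul ((hwca _ h1.le).comp he)).div ((hqcont _ h1).comp he) (ne_of_gt (hqpos _ h1))
  have hF : ∀ t : ℝ, 0 < t → HasDerivAt (fun t => Real.log (q (Real.exp t))) (g t) t := by
    intro t ht
    have h1 : 1 < Real.exp t := hexp1 t ht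
    have h2 : HasDerivAt (fun t => q (Real.exp t)) (w (Real.exp t) * Real.exp t) t :=
      (hqderiv _ h1).comp t (Real.hasDerivAt_exp t)
    have h3 := h2.log (ne_of_gt (hqpos _ h1))
    convert h3 using 1
    simp only [hg]
    ring
  have hFTC : ∀ t : ℝ, 0 < t → (∫ s in t..(t+1), g s)
      = Real.log (q (Real.exp (t+1))) - Real.log (q (Real.exp t)) := by
    intro t ht
    apply intervalIntegral.integral_eq_sub_of_hasDerivAt (f := fun r => Real.log (q (Real.exp r)))
    · intro s hs
      rw [Set.uIcc_of_le (by linarith : t ≤ t+1)] at hs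
      exact hF s (by linarith [hs.1])
    · apply ContinuousOn.intervalIntegrable
      intro s hs
      rw [Set.uIcc_of_le (by linarith : t ≤ t+1)] at hs
      exact (hgca s (by linarith [hs.1])).continuousWithinAt
  have hFlim : Tendsto (fun t => Real.log (q (Real.exp (t+1))) - Real.log (q (Real.exp t)))
      atTop (nhds α) := by
    have h1 : Tendsto (fun y => q (Real.exp 1 * y) / q y) atTop (nhds ((Real.exp 1) ^ α)) :=
      hrv _ (Real.exp_pos 1)
    have h2 := (h1.comp Real.tendsto_exp_atTop).log
      (ne_of_gt (Real.rpow_pos_of_pos (Real.exp_pos 1) α))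
    have h3 : Real.log ((Real.exp 1) ^ α) = α := by
      rw [Real.log_rpow (Real.exp_pos 1), Real.log_exp, mul_one]
    rw [h3] at h2
    apply h2.congr'
    filter_upwards [eventually_gt_atTop (0:ℝ)] with t ht
    have h4 : 1 < Real.exp t := hexp1 t ht
    have h5 : 1 < Real.exp (t+1) := hexp1 _ (by linarith)
    show Real.log (q (Real.exp 1 * Real.exp t) / q (Real.exp t)) = _
    rw [show Real.exp 1 * Real.exp t = Real.exp (t+1) by rw [← Real.exp_add, add_comm]]
    exact Real.log_div (ne_of_gt (hqpos _ h5)) (ne_of_gt (hqpos _ h4))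
  have hgratio : ∀ s : ℝ, 0 ≤ s → Tendsto (fun t => g (t + s) / g t) atTop (nhds 1) := by
    intro s hs
    set l : ℝ := Real.exp s with hl
    have hl1 : (1:ℝ) ≤ l := by
      rw [hl, ← Real.exp_zero]
      exact Real.exp_le_exp.mpr hs
    have hl0 : (0:ℝ) < l := by linarith
    have T1 := ((hwr l hl1).comp Real.tendsto_exp_atTop)
    have T2 := ((hrv l hl0).comp Real.tendsto_exp_atTop).inv₀
      (ne_of_gt (Real.rpow_pos_of_pos hl0 α))
    have T := (tendsto_const_nhds (x := l) (f := atTop)).mul T1 |>.mul T2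
    have hval : l * l ^ (α - 1) * (l ^ α)⁻¹ = 1 := by
      rw [hl, Real.rpow_def_of_pos (Real.exp_pos s), Real.rpow_def_of_pos (Real.exp_pos s),
        Real.log_exp, ← Real.exp_neg, ← Real.exp_add, ← Real.exp_add]
      rw [show s + s * (α - 1) + -(s * α) = 0 by ring, Real.exp_zero]
    rw [hval] at T
    apply T.congr'
    filter_upwards [eventually_gt_atTop (0:ℝ)] with t ht
    have hX1 : 1 < Real.exp t := hexp1 t ht
    have hX0 : (0:ℝ) < Real.exp t := Real.exp_pos t
    have hlX1 : 1 < l * Real.exp t := by nlinarith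
    have e1 : Real.exp (t + s) = l * Real.exp t := by
      rw [Real.exp_add, hl]; ring
    show l * (w (l * Real.exp t) / w (Real.exp t)) * (q (l * Real.exp t) / q (Real.exp t))⁻¹
        = g (t + s) / g t
    simp only [hg, e1]
    rw [inv_div]
    have hwX := hwpos _ hX1.le
    have hwlX := hwpos _ hlX1.le
    have hqX := hqpos _ hX1
    have hqlX := hqpos _ hlX1
    field_simp
  
  have hFlim' : Tendsto (fun t => ∫ s in t..(t+1), g s) atTop (nhds α) := by
    apply hFlim.congr'
    filter_upwards [eventually_gt_atTop (0:ℝ)] with t ht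
    exact (hFTC t ht).symm
  have hshift : ∀ t : ℝ, 0 < t → (∫ s in (0:ℝ)..1, g (t + s))
      = Real.log (q (Real.exp (t+1))) - Real.log (q (Real.exp t)) := by
    intro t ht
    rw [intervalIntegral.integral_comp_add_left g t, add_zero, ← hFTC t ht]
  have hgcint : ∀ t : ℝ, 0 < t → IntervalIntegrable (fun s => g (t + s)) volume 0 1 := by
    intro t ht
    apply ContinuousOn.intervalIntegrable
    intro s hs
    rw [Set.uIcc_of_le (by norm_num : (0:ℝ) ≤ 1)] at hs
    exact ((hgca (t + s) (by linarith [hs.1])).comp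
      (continuousAt_const.add continuousAt_id)).continuousWithinAt
  have hupper : ∀ ε : ℝ, 0 < ε → ∀ᶠ t in atTop, g t ≤ α + ε := by
    intro ε hε
    by_contra hc
    rw [Filter.not_eventually] at hc
    simp only [not_le] at hc
    have hne : (atTop ⊓ Filter.principal {t : ℝ | α + ε < g t}).NeBot := by
      rwa [Filter.frequently_iff_neBot] at hc
    set lf : Filter ℝ := atTop ⊓ Filter.principal {t : ℝ | α + ε < g t} with hlfdef
    have hlfle : lf ≤ atTop := inf_le_left
    have hgb : ∀ᶠ t in lf, α + ε < g t :=
      eventually_inf_principal.mpr (Eventually.of_forall (fun t ht => ht))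
    have hev0 : ∀ᶠ t in lf, 0 < t := (eventually_gt_atTop 0).filter_mono hlfle
    have hDCT : Tendsto (fun t => ∫ s in (0:ℝ)..1, min (g (t + s) / g t) 2) lf
        (nhds (∫ _s in (0:ℝ)..1, (1:ℝ))) := by
      apply intervalIntegral.tendsto_integral_filter_of_dominated_convergence
        (bound := fun _ => 2)
      · filter_upwards [hev0] with t ht0
        apply ContinuousOn.aestronglyMeasurable _ measurableSet_uIoc
        intro s hs
        rw [Set.uIoc_of_le (by norm_num : (0:ℝ) ≤ 1)] at hs
        have : ContinuousAt (fun s => g (t + s)) s := (hgca (t + s) (by linarith [hs.1])).comp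
          (continuousAt_const.add continuousAt_id)
        have hmin : ContinuousAt (fun s => min (g (t + s) / g t) 2) s :=
          ContinuousAt.inf (this.div continuousAt_const (ne_of_gt (hgpos t ht0)))
            continuousAt_const
        exact hmin.continuousWithinAt
      · filter_upwards [hev0] with t ht0
        apply Eventually.of_forall
        intro s hs
        rw [Set.uIoc_of_le (by norm_num : (0:ℝ) ≤ 1)] at hs
        have h1 : 0 ≤ g (t + s) / g t :=
          div_nonneg (hgpos (t + s) (by linarith [hs.1])).le (hgpos t ht0).le
        rw [Real.norm_eq_abs, abs_le]
        constructor
        · linarith [le_min h1 (by norm_num : (0:ℝ) ≤ 2)]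
        · exact min_le_right _ _
      · exact intervalIntegrable_const
      · apply Eventually.of_forall
        intro s hs
        rw [Set.uIoc_of_le (by norm_num : (0:ℝ) ≤ 1)] at hs
        have h1 := ((hgratio s hs.1.le).mono_left hlfle).min
          (tendsto_const_nhds (x := (2:ℝ)))
        rw [show min (1:ℝ) 2 = 1 by norm_num] at h1
        exact h1
    rw [intervalIntegral.integral_const, smul_eq_mul, mul_one, sub_zero] at hDCT
    have hcmp : ∀ᶠ t in lf, (∫ s in (0:ℝ)..1, min (g (t + s) / g t) 2)
        ≤ (Real.log (q (Real.exp (t+1))) - Real.log (q (Real.exp t))) / (α + ε) := by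
      filter_upwards [hgb, hev0] with t ht ht0
      have hgt : 0 < g t := hgpos t ht0
      have hint1 : IntervalIntegrable (fun s => g (t + s) / g t) volume 0 1 :=
        (hgcint t ht0).div_const _
      have h1 : (∫ s in (0:ℝ)..1, min (g (t + s) / g t) 2)
          ≤ ∫ s in (0:ℝ)..1, g (t + s) / g t := by
        apply intervalIntegral.integral_mono_on (by norm_num)
        · apply ContinuousOn.intervalIntegrable
          intro s hs
          rw [Set.uIcc_of_le (by norm_num : (0:ℝ) ≤ 1)] at hs
          have : ContinuousAt (fun s => g (t + s)) s := (hgca (t + s) (by linarith [hs.1])).comp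
            (continuousAt_const.add continuousAt_id)
          have hmin : ContinuousAt (fun s => min (g (t + s) / g t) 2) s :=
            ContinuousAt.inf (this.div continuousAt_const (ne_of_gt hgt))
              continuousAt_const
          exact hmin.continuousWithinAt
        · exact hint1
        · exact fun s _ => min_le_left _ _
      have h2 : (∫ s in (0:ℝ)..1, g (t + s) / g t)
          = (Real.log (q (Real.exp (t+1))) - Real.log (q (Real.exp t))) / g t := by
        rw [intervalIntegral.integral_div, hshift t ht0]
      rw [h2] at h1
      refine le_trans h1 ?_
      have hX : 0 ≤ Real.log (q (Real.exp (t+1))) - Real.log (q (Real.exp t)) := by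
        have := hqmono (Real.exp t) (Real.exp (t+1)) (hexp1 t ht0).le
          (Real.exp_le_exp.mpr (by linarith))
        have h4 := hqpos _ (hexp1 t ht0)
        have := Real.log_le_log h4 this
        linarith
      exact div_le_div_of_nonneg_left hX (by linarith) ht.le
    have hlim2 : Tendsto (fun t => (Real.log (q (Real.exp (t+1))) - Real.log (q (Real.exp t))) / (α + ε))
        lf (nhds (α / (α + ε))) := (hFlim.mono_left hlfle).div_const _
    have hle : (1:ℝ) ≤ α / (α + ε) := le_of_tendsto_of_tendsto hDCT hlim2 hcmp
    have : α / (α + ε) < 1 := by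
      rw [div_lt_one (by linarith)]; linarith
    linarith
  
  have hlower : ∀ ε : ℝ, 0 < ε → ∀ᶠ t in atTop, α - ε ≤ g t := by
    intro ε hε
    rcases le_or_gt (α - ε) 0 with hαε | hαε
    · filter_upwards [eventually_gt_atTop (0:ℝ)] with t ht
      exact le_trans hαε (hgpos t ht).le
    by_contra hc
    rw [Filter.not_eventually] at hc
    simp only [not_le] at hc
    have hne : (atTop ⊓ Filter.principal {t : ℝ | g t < α - ε}).NeBot := by
      rwa [Filter.frequently_iff_neBot] at hc
    set lf : Filter ℝ := atTop ⊓ Filter.principal {t : ℝ | g t < α - ε} with hlfdef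
    have hlfle : lf ≤ atTop := inf_le_left
    have hgb : ∀ᶠ t in lf, g t < α - ε :=
      eventually_inf_principal.mpr (Eventually.of_forall (fun t ht => ht))
    have hev0 : ∀ᶠ t in lf, 0 < t := (eventually_gt_atTop 0).filter_mono hlfle
    obtain ⟨T, hT⟩ := (hupper 1 one_pos).exists_forall_of_atTop
    have hevT : ∀ᶠ t in lf, max T 0 ≤ t := (eventually_ge_atTop _).filter_mono hlfle
    -- DCT for the max-truncated functions
    have hDCT : Tendsto (fun t => ∫ s in (0:ℝ)..1, max (g (t + s)) (α - ε)) lf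
        (nhds (∫ _s in (0:ℝ)..1, (α - ε))) := by
      apply intervalIntegral.tendsto_integral_filter_of_dominated_convergence
        (bound := fun _ => α + 1)
      · filter_upwards [hev0] with t ht0
        apply ContinuousOn.aestronglyMeasurable _ measurableSet_uIoc
        intro s hs
        rw [Set.uIoc_of_le (by norm_num : (0:ℝ) ≤ 1)] at hs
        have hca : ContinuousAt (fun s => g (t + s)) s := (hgca (t + s) (by linarith [hs.1])).comp
          (continuousAt_const.add continuousAt_id)
        have hmax : ContinuousAt (fun s => max (g (t + s)) (α - ε)) s :=
          ContinuousAt.sup hca continuousAt_const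
        exact hmax.continuousWithinAt
      · filter_upwards [hev0, hevT] with t ht0 htT
        apply Eventually.of_forall
        intro s hs
        rw [Set.uIoc_of_le (by norm_num : (0:ℝ) ≤ 1)] at hs
        have h1 : 0 < g (t + s) := hgpos (t + s) (by linarith [hs.1])
        have h2 : g (t + s) ≤ α + 1 := by
          apply hT
          have := le_max_left T (0:ℝ)
          linarith [hs.1]
        rw [Real.norm_eq_abs, abs_le]
        constructor
        · have : α - ε ≤ α + 1 := by linarith
          nlinarith [le_max_right (g (t + s)) (α - ε), hαε]
        · exact max_le h2 (by linarith)
      · exact intervalIntegrable_const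
      · apply Eventually.of_forall
        intro s hs
        rw [Set.uIoc_of_le (by norm_num : (0:ℝ) ≤ 1)] at hs
        have hup : Tendsto (fun t => (α - ε) * max (g (t + s) / g t) 1) lf (nhds (α - ε)) := by
          have h1 := ((hgratio s hs.1.le).mono_left hlfle).max
            (tendsto_const_nhds (x := (1:ℝ)))
          rw [show max (1:ℝ) 1 = 1 by norm_num] at h1
          simpa using (tendsto_const_nhds (x := α - ε) (f := lf)).mul h1
        have hlow : Tendsto (fun _t : ℝ => α - ε) lf (nhds (α - ε)) := tendsto_const_nhds
        apply tendsto_of_tendsto_of_tendsto_of_le_of_le' hlow hup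
        · exact Eventually.of_forall (fun t => le_max_right _ _)
        · filter_upwards [hgb, hev0] with t htb ht0
          have hgt : 0 < g t := hgpos t ht0
          have hr : 0 ≤ g (t + s) / g t :=
            div_nonneg (hgpos (t + s) (by linarith [hs.1])).le hgt.le
          have he : g t * (g (t + s) / g t) = g (t + s) := by field_simp
          have h1 : g (t + s) ≤ (α - ε) * (g (t + s) / g t) := by
            nlinarith [mul_le_mul_of_nonneg_right htb.le hr]
          apply max_le
          · exact le_trans h1 (mul_le_mul_of_nonneg_left (le_max_left _ _) hαε.le)
          · nlinarith [le_max_right (g (t + s) / g t) (1:ℝ)]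
    rw [intervalIntegral.integral_const, smul_eq_mul, sub_zero, one_mul] at hDCT
    have hcmp : ∀ᶠ t in lf, (Real.log (q (Real.exp (t+1))) - Real.log (q (Real.exp t)))
        ≤ ∫ s in (0:ℝ)..1, max (g (t + s)) (α - ε) := by
      filter_upwards [hev0] with t ht0
      rw [← hshift t ht0]
      apply intervalIntegral.integral_mono_on (by norm_num)
      · exact hgcint t ht0
      · apply ContinuousOn.intervalIntegrable
        intro s hs
        rw [Set.uIcc_of_le (by norm_num : (0:ℝ) ≤ 1)] at hs
        have hca : ContinuousAt (fun s => g (t + s)) s := (hgca (t + s) (by linarith [hs.1])).comp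
          (continuousAt_const.add continuousAt_id)
        exact (ContinuousAt.sup hca continuousAt_const).continuousWithinAt
      · exact fun s _ => le_max_left _ _
    have hle : α ≤ α - ε :=
      le_of_tendsto_of_tendsto (hFlim.mono_left hlfle) hDCT hcmp
    linarith
  -- conclusion: g → α
  have hgα : Tendsto g atTop (nhds α) := by
    rw [Metric.tendsto_nhds]
    intro ε hε
    filter_upwards [hupper (ε/2) (by linarith), hlower (ε/2) (by linarith)] with t h1 h2
    rw [Real.dist_eq, abs_lt]
    constructor <;> linarith
  refine ⟨hqstrict, hqpos, hrv, ?_⟩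
  · have := hgα.comp Real.tendsto_log_atTop
    apply this.congr'
    filter_upwards [eventually_gt_atTop (1:ℝ)] with y hy
    show g (Real.log y) = y * w y / q y
    simp only [hg]
    rw [Real.exp_log (by linarith)]


lemma qinv_props (α : ℝ) (hα0 : 0 < α) (q qinv : ℝ → ℝ)
    (hqsm : ∀ a b : ℝ, 1 ≤ a → a < b → q a < q b)
    (hqposev : ∀ y : ℝ, 1 < y → 0 < q y)
    (hrv : ∀ l : ℝ, 0 < l → Tendsto (fun y => q (l * y) / q y) atTop (nhds (l ^ α)))
    (hqinv : ∀ᶠ x in atTop, q (qinv x) = x ∧ 1 ≤ qinv x) :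
    Tendsto qinv atTop atTop ∧
    (∀ t : ℝ, 0 < t → Tendsto (fun x => qinv (t * x) / qinv x) atTop (nhds (t ^ (1/α)))) ∧
    (∀ c : ℝ, Tendsto (fun x => qinv (x + c) / qinv x) atTop (nhds 1)) := by
  have hqmono : ∀ a b : ℝ, 1 ≤ a → a ≤ b → q a ≤ q b := by
    intro a b ha hab
    rcases eq_or_lt_of_le hab with h | h
    · rw [h]
    · exact (hqsm a b ha h).le
  have hYtop : Tendsto qinv atTop atTop := by
    rw [tendsto_atTop]
    intro M
    set M' := max M 1 with hM'
    have hM1 : (1:ℝ) ≤ M' := le_max_right _ _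
    filter_upwards [hqinv, eventually_gt_atTop (q M')] with x hx1 hx2
    by_contra hcon
    push_neg at hcon
    have h1 : qinv x ≤ M' := le_trans hcon.le (le_max_left _ _)
    have h2 : q (qinv x) ≤ q M' := hqmono _ _ hx1.2 h1
    rw [hx1.1] at h2
    linarith
  -- generic two-sided sandwich lemma
  have hsand : ∀ lo hi : ℝ, 0 < lo → lo < hi →
      (∀ᶠ x in atTop, ∃ z : ℝ, q z = x ∧ 1 ≤ z ∧ qinv x = z) → True := fun _ _ _ _ _ => trivial
  refine ⟨hYtop, ?_, ?_⟩
  · intro t ht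
    rw [Metric.tendsto_nhds]
    intro ε hε
    set c : ℝ := t ^ (1/α) with hc
    have hc0 : 0 < c := Real.rpow_pos_of_pos ht _
    set δ : ℝ := min (ε/2) (c/2) with hδ
    have hδ0 : 0 < δ := lt_min (by linarith) (by linarith)
    have hδε : δ ≤ ε/2 := min_le_left _ _
    have hδc : δ ≤ c/2 := min_le_right _ _
    have hl1 : 0 < c - δ := by linarith
    have hca : c ^ α = t := by
      rw [hc, ← Real.rpow_mul ht.le]
      rw [show 1/α * α = 1 by field_simp, Real.rpow_one]
    have h1 : (c - δ) ^ α < t := by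
      calc (c-δ)^α < c^α := Real.rpow_lt_rpow hl1.le (by linarith) hα0
        _ = t := hca
    have h2 : t < (c + δ)^α := by
      rw [← hca]
      exact Real.rpow_lt_rpow hc0.le (by linarith) hα0
    have hev1 : ∀ᶠ y in atTop, t * q y < q ((c+δ) * y) := by
      have h3 := (hrv (c+δ) (by linarith)).eventually (eventually_gt_nhds h2)
      filter_upwards [h3, eventually_gt_atTop (1:ℝ)] with y h4 h5
      have h6 := hqposev y h5
      have h7 := mul_lt_mul_of_pos_right h4 h6
      rwa [div_mul_cancel₀ _ (ne_of_gt h6)] at h7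
    have hev2 : ∀ᶠ y in atTop, q ((c-δ) * y) < t * q y := by
      have h3 := (hrv (c-δ) hl1).eventually (eventually_lt_nhds h1)
      filter_upwards [h3, eventually_gt_atTop (1:ℝ)] with y h4 h5
      have h6 := hqposev y h5
      have h7 := mul_lt_mul_of_pos_right h4 h6
      rwa [div_mul_cancel₀ _ (ne_of_gt h6)] at h7
    have htx : Tendsto (fun x : ℝ => t * x) atTop atTop :=
      Tendsto.const_mul_atTop ht tendsto_id
    filter_upwards [hqinv, htx.eventually hqinv, hYtop.eventually hev1, hYtop.eventually hev2,
      hYtop.eventually (eventually_ge_atTop (1/(c-δ))),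
      hYtop.eventually (eventually_ge_atTop (1/(c+δ))),
      hYtop.eventually (eventually_ge_atTop 1)] with x hx1 hx2 hx3 hx4 hx5 hx6 hx7
    obtain ⟨hq1, hq2⟩ := hx1
    obtain ⟨hq3, hq4⟩ := hx2
    rw [hq1] at hx3 hx4
    have hY1 : (1:ℝ) ≤ (c+δ) * qinv x := by
      have h8 := mul_le_mul_of_nonneg_left hx6 (by linarith : (0:ℝ) ≤ c + δ)
      rwa [mul_one_div, div_self (by linarith : c + δ ≠ 0)] at h8
    have hY2 : (1:ℝ) ≤ (c-δ) * qinv x := by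
      have h8 := mul_le_mul_of_nonneg_left hx5 hl1.le
      rwa [mul_one_div, div_self (ne_of_gt hl1)] at h8
    have hlt1 : qinv (t*x) < (c+δ) * qinv x := by
      by_contra hcon
      push_neg at hcon
      have h9 := hqmono _ _ hY1 hcon
      rw [hq3] at h9
      linarith
    have hlt2 : (c-δ) * qinv x < qinv (t*x) := by
      by_contra hcon
      push_neg at hcon
      have h9 := hqmono _ _ hq4 hcon
      rw [hq3] at h9
      linarith
    have hqx0 : (0:ℝ) < qinv x := by linarith
    rw [Real.dist_eq, abs_lt]
    have hr1 : c - δ < qinv (t*x) / qinv x := by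
      rw [lt_div_iff₀ hqx0]; linarith
    have hr2 : qinv (t*x) / qinv x < c + δ := by
      rw [div_lt_iff₀ hqx0]; linarith
    constructor <;> linarith
  · intro cc
    rw [Metric.tendsto_nhds]
    intro ε hε
    set δ : ℝ := min (ε/2) (1/2) with hδ
    have hδ0 : 0 < δ := lt_min (by linarith) (by norm_num)
    have hδε : δ ≤ ε/2 := min_le_left _ _
    have hδh : δ ≤ 1/2 := min_le_right _ _
    have hup : (1:ℝ) < (1+δ)^α := by
      rw [Real.one_lt_rpow_iff_of_pos (by linarith)]
      exact Or.inl ⟨by linarith, hα0⟩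
    have hdn : (1-δ)^α < 1 := Real.rpow_lt_one (by linarith) (by linarith) hα0
    set r : ℝ := (1 + (1+δ)^α)/2 with hr
    set r' : ℝ := ((1-δ)^α + 1)/2 with hr'
    have hr1 : 1 < r := by rw [hr]; linarith
    have hr2 : r < (1+δ)^α := by rw [hr]; linarith
    have hr3 : (1-δ)^α < r' := by rw [hr']; linarith
    have hr4 : r' < 1 := by rw [hr']; linarith
    have hev1 : ∀ᶠ y in atTop, r * q y < q ((1+δ) * y) := by
      have h3 := (hrv (1+δ) (by linarith)).eventually (eventually_gt_nhds hr2)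
      filter_upwards [h3, eventually_gt_atTop (1:ℝ)] with y h4 h5
      have h6 := hqposev y h5
      have h7 := mul_lt_mul_of_pos_right h4 h6
      rwa [div_mul_cancel₀ _ (ne_of_gt h6)] at h7
    have hev2 : ∀ᶠ y in atTop, q ((1-δ) * y) < r' * q y := by
      have h3 := (hrv (1-δ) (by linarith)).eventually (eventually_lt_nhds hr3)
      filter_upwards [h3, eventually_gt_atTop (1:ℝ)] with y h4 h5
      have h6 := hqposev y h5
      have h7 := mul_lt_mul_of_pos_right h4 h6
      rwa [div_mul_cancel₀ _ (ne_of_gt h6)] at h7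
    have htx : Tendsto (fun x : ℝ => x + cc) atTop atTop :=
      tendsto_atTop_add_const_right atTop cc tendsto_id
    filter_upwards [hqinv, htx.eventually hqinv, hYtop.eventually hev1, hYtop.eventually hev2,
      hYtop.eventually (eventually_ge_atTop (1/(1-δ))),
      hYtop.eventually (eventually_ge_atTop 1),
      eventually_ge_atTop (cc/(r-1)), eventually_ge_atTop (-cc/(1-r'))]
      with x hx1 hx2 hx3 hx4 hx5 hx7 hx8 hx9
    obtain ⟨hq1, hq2⟩ := hx1
    obtain ⟨hq3, hq4⟩ := hx2
    rw [hq1] at hx3 hx4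
    have hne1 : (0:ℝ) < r - 1 := by linarith
    have hne2 : (0:ℝ) < 1 - r' := by linarith
    have h10 : cc ≤ (r-1) * x := by
      have h := mul_le_mul_of_nonneg_left hx8 hne1.le
      rwa [mul_comm (r-1) (cc/(r-1)), div_mul_cancel₀ _ (ne_of_gt hne1)] at h
    have h11 : -cc ≤ (1-r') * x := by
      have h := mul_le_mul_of_nonneg_left hx9 hne2.le
      rwa [mul_comm (1-r') (-cc/(1-r')), div_mul_cancel₀ _ (ne_of_gt hne2)] at h
    have hY1 : (1:ℝ) ≤ (1+δ) * qinv x := by nlinarith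
    have hY2 : (1:ℝ) ≤ (1-δ) * qinv x := by
      have h8 := mul_le_mul_of_nonneg_left hx5 (by linarith : (0:ℝ) ≤ 1-δ)
      rwa [mul_one_div, div_self (by linarith : (1:ℝ)-δ ≠ 0)] at h8
    have hlt1 : qinv (x+cc) < (1+δ) * qinv x := by
      by_contra hcon
      push_neg at hcon
      have h9 := hqmono _ _ hY1 hcon
      rw [hq3] at h9
      linarith
    have hlt2 : (1-δ) * qinv x < qinv (x+cc) := by
      by_contra hcon
      push_neg at hcon
      have h9 := hqmono _ _ hq4 hcon
      rw [hq3] at h9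
      linarith
    have hqx0 : (0:ℝ) < qinv x := by linarith
    rw [Real.dist_eq, abs_lt]
    have hr5 : 1 - δ < qinv (x+cc)/qinv x := by rw [lt_div_iff₀ hqx0]; linarith
    have hr6 : qinv (x+cc)/qinv x < 1 + δ := by rw [div_lt_iff₀ hqx0]; linarith
    constructor <;> linarith



/-- With `q(x) = ∫₁ˣ du/(u^{1-α}L(u))`, `H̄ = exp(-q)`, `G` the inverse of
`1/(γH̄)` and `SL(x) = x^{-1/α}·q^←(x)`, the function `SL` is slowly varying,
`G(x) ~ (log x)^{1/α} SL(log x)` and `h(G(x)) ~ α⁻¹ (log x)^{1/α-1} SL(log x)`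
as `x → ∞`, where `h(u) = u^{1-α}L(u)`. -/
theorem stmt10 (α γ : ℝ) (hα0 : 0 < α) (hα1 : α < 1) (hγ : 0 < γ)
    (L : ℝ → ℝ) (hLpos : ∀ x, 1 ≤ x → 0 < L x) (hLcont : Continuous L)
    (hLsv : ∀ t : ℝ, 0 < t → Tendsto (fun x => L (t * x) / L x) atTop (nhds 1))
    (q Hbar h G qinv SL : ℝ → ℝ)
    (hq : ∀ x, 1 ≤ x → q x = ∫ u in (1 : ℝ)..x, 1 / (u ^ (1 - α) * L u))
    (hHbar : ∀ x, 1 ≤ x → Hbar x = Real.exp (-q x))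
    (hh : ∀ x, h x = x ^ (1 - α) * L x)
    (hqinv : ∀ᶠ x in atTop, q (qinv x) = x ∧ 1 ≤ qinv x)
    (hqinv' : ∀ᶠ x in atTop, qinv (q x) = x)
    (hGinv : ∀ᶠ x in atTop, 1 / (γ * Hbar (G x)) = x ∧ 1 ≤ G x)
    (hSL : ∀ x, SL x = x ^ (-(1 / α)) * qinv x) :
    (∀ t : ℝ, 0 < t → Tendsto (fun x => SL (t * x) / SL x) atTop (nhds 1)) ∧
    Tendsto (fun x => G x / ((Real.log x) ^ (1 / α) * SL (Real.log x))) atTop (nhds 1) ∧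
    Tendsto (fun x => h (G x) / (α⁻¹ * (Real.log x) ^ (1 / α - 1) * SL (Real.log x)))
      atTop (nhds 1) := by
  -- basic monotonicity of q
  set w : ℝ → ℝ := fun u => 1 / (u ^ (1-α) * L u) with hw
  have hwca : ∀ u, 1 ≤ u → ContinuousAt w u := by
    intro u hu
    have h1 : ContinuousAt (fun u : ℝ => u ^ (1-α)) u :=
      Real.continuousAt_rpow_const u (1-α) (Or.inl (by linarith))
    exact continuousAt_const.div (h1.mul hLcont.continuousAt) (by
      have := hLpos u hu; positivity)
  have hwpos : ∀ u, 1 ≤ u → 0 < w u := by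
    intro u hu
    have h1 := hLpos u hu
    have h2 : 0 < u ^ (1-α) := Real.rpow_pos_of_pos (by linarith) _
    simp only [hw]
    positivity
  have hInt : ∀ a b : ℝ, 1 ≤ a → 1 ≤ b → IntervalIntegrable w volume a b := by
    intro a b ha hb
    apply ContinuousOn.intervalIntegrable
    intro u hu
    have h1 : (1:ℝ) ≤ u := le_trans (le_min ha hb) (Set.mem_uIcc.mp hu |>.elim
      (fun h => le_trans (min_le_left a b) h.1) (fun h => le_trans (min_le_right a b) h.1))
    exact (hwca u h1).continuousWithinAt
  have hqmono : ∀ a b : ℝ, 1 ≤ a → a ≤ b → q a ≤ q b := by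
    intro a b ha hab
    rw [hq a ha, hq b (le_trans ha hab),
      ← intervalIntegral.integral_add_adjacent_intervals (hInt 1 a le_rfl ha)
        (hInt a b ha (le_trans ha hab))]
    have : 0 ≤ ∫ u in a..b, w u :=
      intervalIntegral.integral_nonneg hab (fun u hu => le_of_lt (hwpos u (le_trans ha hu.1)))
    linarith
  have hqtop : Tendsto q atTop atTop := by
    rw [tendsto_atTop]
    intro M
    obtain ⟨x₀, hx₀⟩ := (hqinv.and (eventually_ge_atTop (max M 1))).exists
    obtain ⟨⟨he1, he2⟩, he3⟩ := hx₀
    filter_upwards [eventually_ge_atTop (qinv x₀)] with y hy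
    calc M ≤ max M 1 := le_max_left _ _
      _ ≤ x₀ := he3
      _ = q (qinv x₀) := he1.symm
      _ ≤ q y := hqmono _ _ he2 hy
  obtain ⟨hqstrict, hqpos, hrv, hKar⟩ :=
    karamata_main α hα0 hα1 L hLpos hLcont hLsv q hq hqtop
  obtain ⟨hYtop, hQrv, hshift⟩ := qinv_props α hα0 q qinv hqstrict hqpos hrv hqinv
  -- eventual positivity of qinv
  have hqinvpos : ∀ᶠ x in atTop, (1:ℝ) ≤ qinv x := by
    filter_upwards [hqinv] with x hx; exact hx.2
  -- Claim 1 : SL slowly varying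
  have claim1 : ∀ t : ℝ, 0 < t → Tendsto (fun x => SL (t * x) / SL x) atTop (nhds 1) := by
    intro t ht
    have h1 := (tendsto_const_nhds (x := t ^ (-(1/α))) (f := (atTop : Filter ℝ))).mul (hQrv t ht)
    have hv : t ^ (-(1/α)) * t ^ (1/α) = 1 := by
      rw [← Real.rpow_add ht]
      norm_num
    rw [hv] at h1
    apply h1.congr'
    filter_upwards [eventually_gt_atTop (0:ℝ)] with x hx0
    show t ^ (-(1/α)) * (qinv (t*x) / qinv x) = SL (t*x) / SL x
    rw [hSL, hSL, Real.mul_rpow ht.le hx0.le, mul_assoc, mul_div_assoc,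
      mul_div_mul_left _ _ (ne_of_gt (Real.rpow_pos_of_pos hx0 _)), ← mul_div_assoc]
  -- structure of G
  have hGq : ∀ᶠ x in atTop, q (G x) = Real.log γ + Real.log x ∧ 1 ≤ G x := by
    filter_upwards [hGinv, eventually_gt_atTop (0:ℝ)] with x hx hx0
    obtain ⟨hg1, hg2⟩ := hx
    rw [hHbar _ hg2] at hg1
    have he : Real.exp (q (G x)) = γ * x := by
      rw [Real.exp_neg] at hg1
      field_simp at hg1
      linarith
    refine ⟨?_, hg2⟩
    have := congrArg Real.log he
    rwa [Real.log_exp, Real.log_mul (ne_of_gt hγ) (ne_of_gt hx0)] at this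
  have hGtop : Tendsto G atTop atTop := by
    rw [tendsto_atTop]
    intro M
    set M₁ : ℝ := max M 1 with hM₁
    have hlog : Tendsto (fun x => Real.log γ + Real.log x) atTop atTop :=
      tendsto_atTop_add_const_left _ _ Real.tendsto_log_atTop
    filter_upwards [hGq, hlog.eventually (eventually_gt_atTop (q M₁))] with x h1 h2
    by_contra hcon
    push_neg at hcon
    have h3 : G x ≤ M₁ := le_trans hcon.le (le_max_left _ _)
    have h4 := hqmono _ _ h1.2 h3
    rw [h1.1] at h4
    linarith
  have hGeq : ∀ᶠ x in atTop, G x = qinv (Real.log γ + Real.log x) := by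
    filter_upwards [hGq, hGtop.eventually hqinv'] with x h1 h2
    rw [← h1.1, h2]
  -- ratio G x / qinv (log x) → 1
  have hT2 : Tendsto (fun x => G x / qinv (Real.log x)) atTop (nhds 1) := by
    have h2 := (hshift (Real.log γ)).comp Real.tendsto_log_atTop
    apply h2.congr'
    filter_upwards [hGeq] with x hG
    show qinv (Real.log x + Real.log γ) / qinv (Real.log x) = _
    rw [hG, add_comm]
  -- Claim 2
  have claim2 : Tendsto (fun x => G x / ((Real.log x) ^ (1 / α) * SL (Real.log x)))
      atTop (nhds 1) := by
    apply hT2.congr'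
    filter_upwards [Real.tendsto_log_atTop.eventually (eventually_gt_atTop (0:ℝ))] with x hlx
    show G x / qinv (Real.log x) = _
    rw [hSL, ← mul_assoc, ← Real.rpow_add hlx]
    norm_num
  -- Claim 3
  have hT1 : Tendsto (fun x => α * h (G x) * q (G x) / G x) atTop (nhds 1) := by
    have h1 := (hKar.inv₀ (ne_of_gt hα0)).comp hGtop
    have h2 := (tendsto_const_nhds (x := α) (f := (atTop : Filter ℝ))).mul h1
    rw [mul_inv_cancel₀ (ne_of_gt hα0)] at h2
    apply h2.congr'
    filter_upwards [hGtop.eventually (eventually_gt_atTop (1:ℝ))] with x hx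
    show α * (G x * w (G x) / q (G x))⁻¹ = α * h (G x) * q (G x) / G x
    have hg0 : (0:ℝ) < G x := by linarith
    have hL0 := hLpos (G x) hx.le
    have hp : (0:ℝ) < (G x) ^ (1-α) := Real.rpow_pos_of_pos hg0 _
    have hq0 := hqpos (G x) hx
    rw [hh]
    simp only [hw]
    field_simp
  have hT3 : Tendsto (fun x => Real.log x / q (G x)) atTop (nhds 1) := by
    have h1 : Tendsto (fun z : ℝ => 1 - Real.log γ / (Real.log γ + z)) atTop (nhds 1) := by
      have h2 : Tendsto (fun z : ℝ => Real.log γ / (Real.log γ + z)) atTop (nhds 0) :=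
        tendsto_const_nhds.div_atTop (tendsto_atTop_add_const_left _ _ tendsto_id)
      have h3 := (tendsto_const_nhds (x := (1:ℝ)) (f := (atTop : Filter ℝ))).sub h2
      rwa [sub_zero] at h3
    have h4 := h1.comp Real.tendsto_log_atTop
    apply h4.congr'
    filter_upwards [hGq, (tendsto_atTop_add_const_left _ (Real.log γ)
        Real.tendsto_log_atTop).eventually (eventually_gt_atTop (0:ℝ))] with x h5 h6
    show 1 - Real.log γ / (Real.log γ + Real.log x) = Real.log x / q (G x)
    rw [h5.1]
    field_simp
    ring
  have hprod := (hT1.mul hT2).mul hT3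
  rw [show ((1:ℝ) * 1 * 1) = 1 by norm_num] at hprod
  have claim3 : Tendsto (fun x => h (G x) /
      (α⁻¹ * (Real.log x) ^ (1 / α - 1) * SL (Real.log x))) atTop (nhds 1) := by
    apply hprod.congr'
    filter_upwards [hGq, Real.tendsto_log_atTop.eventually (eventually_gt_atTop (0:ℝ)),
      (tendsto_atTop_add_const_left _ (Real.log γ)
        Real.tendsto_log_atTop).eventually (eventually_gt_atTop (0:ℝ)),
      Real.tendsto_log_atTop.eventually hqinvpos] with x h1 hlx hpos hqi
    obtain ⟨hqg, hG1⟩ := h1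
    have hG0 : (0:ℝ) < G x := by linarith
    have hqG0 : 0 < q (G x) := by rw [hqg]; exact hpos
    have hqi0 : (0:ℝ) < qinv (Real.log x) := by linarith
    show α * h (G x) * q (G x) / G x * (G x / qinv (Real.log x)) * (Real.log x / q (G x))
        = h (G x) / (α⁻¹ * (Real.log x) ^ (1 / α - 1) * SL (Real.log x))
    rw [hSL]
    have hre : (Real.log x) ^ (1/α - 1) * ((Real.log x) ^ (-(1/α)) * qinv (Real.log x))
        = (Real.log x)⁻¹ * qinv (Real.log x) := by
      rw [← mul_assoc, ← Real.rpow_add hlx,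
        show 1/α - 1 + -(1/α) = -1 by ring, Real.rpow_neg_one]
    rw [mul_assoc α⁻¹, hre]
    field_simp
  exact ⟨claim1, claim2, claim3⟩
end

section
/- Let V be the inverse of x ↦ 1/ν̄(x) where ν̄ is a tail satisfying ν̄(x) ~ γH̄(x) as x → ∞ with H̄(x) = exp{-∫₁^x du/(u^{1-α}L_α(u))}, 0 < α < 1, L_α slowly varying with L_α'(x) = o(L_α(x)/x). Then for every t > 0, (V(tx) - V(x))/h(V(x)) → log t as x → ∞, where h(u) = u^{1-α}L_α(u). -/
/-!
Put `I(b) = ∫₁ᵇ du / h(u)`, so that `H̄ = exp (-I)`. From `ν̄(V x) = 1/x` and `ν̄ ~ γ H̄` we get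
`I(V x) = log x + log γ + o(1)`, hence `∫_{V x}^{V(tx)} du / h(u) → log t`. By the mean value
theorem for integrals this integral is `(V(tx) - V x) / h(ξ)` for some `ξ` between `V x` and
`V(tx)`, and `h(ξ) / h(V x) → 1`: as `h' → 0`, `h` is eventually `ε`-Lipschitz, so
`|h ξ - h (V x)| ≤ ε |V(tx) - V x|`, which is `ε` times a bounded multiple of `h ξ`.
Finally `h'(u) = u^{-α} L(u) (1 - α + u L'(u) / L(u)) → 0`, because `u L'/L → 0` forces `L` to
grow more slowly than any power of `u`.
-/

open Real Filter MeasureTheory Set Topology NNReal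

theorem exists_integral_inv_eq_sub_div {h : ℝ → ℝ} {a b : ℝ} (hcont : ContinuousOn h (uIcc a b))
    (hne : ∀ u ∈ uIcc a b, h u ≠ 0) :
    ∃ ξ ∈ uIcc a b, ∫ u in a..b, (h u)⁻¹ = (b - a) / h ξ := by
  rcases eq_or_ne a b with rfl | hab
  · exact ⟨a, left_mem_uIcc, by simp⟩
  obtain ⟨ξ, hξ, heq⟩ := exists_eq_interval_average hab (hcont.inv₀ hne)
  refine ⟨ξ, uIoo_subset_uIcc_self hξ, ?_⟩
  rw [interval_average_eq_div, eq_div_iff (sub_ne_zero.2 hab.symm)] at heq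
  simp only [Pi.inv_apply] at heq
  rw [← heq]
  field_simp

theorem abs_sub_div_sub_integral_inv_le {h : ℝ → ℝ} {s : Set ℝ} {ε : ℝ≥0} (hs : s.OrdConnected)
    (hlip : LipschitzOnWith ε h s) (hpos : ∀ u ∈ s, 0 < h u) {a b : ℝ} (ha : a ∈ s) (hb : b ∈ s) :
    |(b - a) / h a - ∫ u in a..b, (h u)⁻¹| ≤
      ε * |∫ u in a..b, (h u)⁻¹| * |(b - a) / h a| := by
  have hsub := hs.uIcc_subset ha hb
  obtain ⟨ξ, hξ, hD⟩ := exists_integral_inv_eq_sub_div (hlip.continuousOn.mono hsub)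
    (fun u hu => (hpos u (hsub hu)).ne')
  have hha := hpos a ha
  have hhξ := hpos ξ (hsub hξ)
  have hξa : |h ξ - h a| ≤ ε * |b - a| := by
    calc |h ξ - h a| ≤ ε * |ξ - a| := by
          simpa only [Real.dist_eq] using hlip.dist_le_mul ξ (hsub hξ) a ha
      _ ≤ ε * |b - a| := mul_le_mul_of_nonneg_left (abs_sub_left_of_mem_uIcc hξ) ε.2
  rw [hD]
  calc |(b - a) / h a - (b - a) / h ξ| = |(b - a) / h ξ| * (|h ξ - h a| / h a) := by
        rw [← abs_of_pos hha, ← abs_div, ← abs_mul, abs_of_pos hha]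
        congr 1
        field_simp
    _ ≤ |(b - a) / h ξ| * (ε * |b - a| / h a) := by gcongr
    _ = ε * |(b - a) / h ξ| * |(b - a) / h a| := by
        rw [abs_div (b - a) (h a), abs_of_pos hha]
        ring

theorem tendsto_of_abs_sub_le_mul_abs {ι : Type*} {l : Filter ι} {D Δ : ι → ℝ} {c : ℝ}
    (hD : Tendsto D l (𝓝 c)) (hΔ : ∀ ε > 0, ∀ᶠ i in l, |Δ i - D i| ≤ ε * |D i| * |Δ i|) :
    Tendsto Δ l (𝓝 c) := by
  rw [Metric.tendsto_nhds]
  intro δ hδ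
  set M := |c| + 1
  have hM0 : 0 < M := by positivity
  set ε := min (1 / (2 * M)) (δ / (4 * M ^ 2))
  have hεM : ε * M ≤ 1 / 2 := by
    have := min_le_left (1 / (2 * M)) (δ / (4 * M ^ 2))
    rw [le_div_iff₀ (by positivity)] at this
    linarith
  have hεM2 : 2 * ε * M ^ 2 ≤ δ / 2 := by
    have := min_le_right (1 / (2 * M)) (δ / (4 * M ^ 2))
    rw [le_div_iff₀ (by positivity)] at this
    linarith
  have hDM : ∀ᶠ i in l, |D i| ≤ M := by
    filter_upwards [Metric.tendsto_nhds.1 hD 1 one_pos] with i hi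
    have := abs_sub_abs_le_abs_sub (D i) c
    rw [Real.dist_eq] at hi
    linarith
  filter_upwards [hDM, Metric.tendsto_nhds.1 hD (δ / 2) (by positivity),
    hΔ ε (by positivity)] with i hDi hDc hi
  have hΔD : |Δ i - D i| ≤ ε * M * |Δ i| := hi.trans (by gcongr)
  have hΔbound : |Δ i| ≤ 2 * M := by
    have := abs_sub_abs_le_abs_sub (Δ i) (D i)
    have := mul_le_mul_of_nonneg_right hεM (abs_nonneg (Δ i))
    linarith
  have hΔD' : |Δ i - D i| ≤ δ / 2 := by
    calc |Δ i - D i| ≤ ε * M * (2 * M) := hΔD.trans (by gcongr)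
      _ = 2 * ε * M ^ 2 := by ring
      _ ≤ δ / 2 := hεM2
  rw [Real.dist_eq] at hDc ⊢
  calc |Δ i - c| ≤ |Δ i - D i| + |D i - c| := abs_sub_le _ _ _
    _ < δ := by linarith

theorem tendsto_sub_div_of_tendsto_integral_inv {ι : Type*} {l : Filter ι} {h : ℝ → ℝ}
    (hpos : ∀ᶠ u in atTop, 0 < h u)
    (hflat : ∀ ε : ℝ≥0, 0 < ε → ∀ᶠ X in atTop, LipschitzOnWith ε h (Ici X))
    {y z : ι → ℝ} (hy : Tendsto y l atTop) (hz : Tendsto z l atTop) {c : ℝ}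
    (hD : Tendsto (fun i => ∫ u in y i..z i, (h u)⁻¹) l (𝓝 c)) :
    Tendsto (fun i => (z i - y i) / h (y i)) l (𝓝 c) := by
  refine tendsto_of_abs_sub_le_mul_abs hD fun ε hε => ?_
  obtain ⟨X, hlip, hXpos⟩ :=
    ((hflat ⟨ε, hε.le⟩ hε).and (eventually_forall_ge_atTop.2 hpos)).exists
  filter_upwards [hy.eventually_ge_atTop X, hz.eventually_ge_atTop X] with i hyi hzi
  exact abs_sub_div_sub_integral_inv_le ordConnected_Ici hlip hXpos hyi hzi

theorem eventually_lipschitzOnWith_Ici_of_tendsto_deriv {h : ℝ → ℝ}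
    (hdiff : ∀ᶠ x in atTop, DifferentiableAt ℝ h x) (hderiv : Tendsto (deriv h) atTop (𝓝 0))
    (ε : ℝ≥0) (hε : 0 < ε) : ∀ᶠ X in atTop, LipschitzOnWith ε h (Ici X) := by
  have hsmall : ∀ᶠ x in atTop, ‖deriv h x‖₊ ≤ ε := by
    filter_upwards [Metric.tendsto_nhds.1 hderiv ε hε] with x hx
    rw [dist_zero_right] at hx
    exact_mod_cast hx.le
  filter_upwards [eventually_forall_ge_atTop.2 (hdiff.and hsmall)] with X hX
  exact (convex_Ici X).lipschitzOnWith_of_nnnorm_deriv_le (fun x hx => (hX x hx).1)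
    fun x hx => (hX x hx).2

theorem tendsto_rpow_neg_mul_of_tendsto_deriv_mul_div {L : ℝ → ℝ}
    (hLpos : ∀ᶠ x in atTop, 0 < L x) (hLdiff : ∀ᶠ x in atTop, DifferentiableAt ℝ L x)
    (hL' : Tendsto (fun x => deriv L x * x / L x) atTop (𝓝 0)) {c : ℝ} (hc : 0 < c) :
    Tendsto (fun x => x ^ (-c) * L x) atTop (𝓝 0) := by
  obtain ⟨X, hX⟩ := eventually_atTop.1 <| (eventually_gt_atTop 0).and <| hLpos.and <|
    hLdiff.and (hL'.eventually (gt_mem_nhds (half_pos hc)))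
  set φ : ℝ → ℝ := fun x => log (L x) - c / 2 * log x
  have hφ' : ∀ x ∈ Ici X, HasDerivAt φ (deriv L x / L x - c / 2 * x⁻¹) x := fun x hx =>
    (((hX x hx).2.2.1.hasDerivAt.log (hX x hx).2.1.ne').sub
      ((hasDerivAt_log (hX x hx).1.ne').const_mul (c / 2)))
  -- `log L` grows at most like `(c / 2) log`, since `x (log L)'(x) < c / 2` eventually.
  have hanti : AntitoneOn φ (Ici X) := by
    refine antitoneOn_of_hasDerivWithinAt_nonpos (convex_Ici X)
      (fun x hx => (hφ' x hx).continuousAt.continuousWithinAt)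
      (fun x hx => (hφ' x (interior_subset hx)).hasDerivWithinAt) fun x hx => ?_
    obtain ⟨hx0, hLx, -, hsmall⟩ := hX x (interior_subset hx)
    have : deriv L x / L x = deriv L x * x / L x * x⁻¹ := by field_simp
    rw [this, sub_nonpos]
    exact mul_le_mul_of_nonneg_right hsmall.le (inv_nonneg.2 hx0.le)
  have hlog_le : ∀ᶠ x in atTop, log (x ^ (-c) * L x) ≤ φ X + -(c / 2) * log x := by
    filter_upwards [eventually_ge_atTop X] with x hx
    obtain ⟨hx0, hLx, -⟩ := hX x hx
    have := hanti self_mem_Ici hx hx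
    rw [log_mul (rpow_pos_of_pos hx0 _).ne' hLx.ne', log_rpow hx0]
    simp only [φ] at this ⊢
    linarith
  have hlog : Tendsto (fun x => log (x ^ (-c) * L x)) atTop atBot :=
    tendsto_atBot_mono' _ hlog_le <| tendsto_atBot_add_const_left _ _ <|
      tendsto_log_atTop.const_mul_atTop_of_neg (by linarith)
  refine (tendsto_exp_atBot.comp hlog).congr' ?_
  filter_upwards [eventually_ge_atTop X] with x hx
  obtain ⟨hx0, hLx, -⟩ := hX x hx
  exact exp_log (mul_pos (rpow_pos_of_pos hx0 _) hLx)

theorem hasDerivAt_rpow_mul {L : ℝ → ℝ} {p x : ℝ} (hx : 0 < x) (hL : DifferentiableAt ℝ L x)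
    (hL0 : L x ≠ 0) :
    HasDerivAt (fun u => u ^ p * L u) (x ^ (-(1 - p)) * L x * (p + deriv L x * x / L x)) x := by
  refine ((hasDerivAt_rpow_const (p := p) (Or.inl hx.ne')).mul hL.hasDerivAt).congr_deriv ?_
  rw [neg_sub, rpow_sub_one hx.ne']
  field_simp

theorem tendsto_deriv_rpow_mul {L : ℝ → ℝ} {p : ℝ} (hp : p < 1)
    (hLpos : ∀ᶠ x in atTop, 0 < L x) (hLdiff : ∀ᶠ x in atTop, DifferentiableAt ℝ L x)
    (hL' : Tendsto (fun x => deriv L x * x / L x) atTop (𝓝 0)) :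
    Tendsto (deriv fun u => u ^ p * L u) atTop (𝓝 0) := by
  have hlim := (tendsto_rpow_neg_mul_of_tendsto_deriv_mul_div hLpos hLdiff hL'
    (sub_pos.2 hp)).mul ((tendsto_const_nhds (x := p)).add hL')
  rw [zero_mul] at hlim
  refine hlim.congr' ?_
  filter_upwards [eventually_gt_atTop 0, hLpos, hLdiff] with x hx hLx hLdx
  exact ((hasDerivAt_rpow_mul hx hLdx hLx.ne').deriv).symm

theorem eventually_lipschitzOnWith_Ici_rpow_mul {L : ℝ → ℝ} {p : ℝ} (hp : p < 1)
    (hLpos : ∀ᶠ x in atTop, 0 < L x) (hLdiff : ∀ᶠ x in atTop, DifferentiableAt ℝ L x)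
    (hL' : Tendsto (fun x => deriv L x * x / L x) atTop (𝓝 0)) (ε : ℝ≥0) (hε : 0 < ε) :
    ∀ᶠ X in atTop, LipschitzOnWith ε (fun u => u ^ p * L u) (Ici X) := by
  refine eventually_lipschitzOnWith_Ici_of_tendsto_deriv ?_
    (tendsto_deriv_rpow_mul hp hLpos hLdiff hL') ε hε
  filter_upwards [eventually_gt_atTop 0, hLpos, hLdiff] with x hx hLx hLdx
  exact (hasDerivAt_rpow_mul hx hLdx hLx.ne').differentiableAt

theorem tendsto_sub_log_of_tendsto_inv_div_mul_exp {g : ℝ → ℝ} {γ : ℝ} (hγ : 0 < γ)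
    (hg : Tendsto (fun x => x⁻¹ / (γ * exp (-g x))) atTop (𝓝 1)) :
    Tendsto (fun x => g x - log x) atTop (𝓝 (log γ)) := by
  have hlog := ((continuousAt_log one_ne_zero).tendsto.comp hg).add_const (log γ)
  rw [log_one, zero_add] at hlog
  refine hlog.congr' ?_
  filter_upwards [eventually_gt_atTop 0] with x hx
  simp only [Function.comp_apply]
  rw [log_div (inv_ne_zero hx.ne') (by positivity), log_inv, log_mul hγ.ne' (exp_pos _).ne',
    log_exp]
  ring

theorem tendsto_sub_comp_mul_of_tendsto_sub_log {g : ℝ → ℝ} {a t : ℝ} (ht : 0 < t)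
    (hg : Tendsto (fun x => g x - log x) atTop (𝓝 a)) :
    Tendsto (fun x => g (t * x) - g x) atTop (𝓝 (log t)) := by
  have hlim := ((hg.comp (tendsto_id.const_mul_atTop ht)).sub hg).add_const (log t)
  rw [sub_self, zero_add] at hlim
  refine hlim.congr' ?_
  filter_upwards [eventually_gt_atTop 0] with x hx
  rw [Function.comp_apply, id, log_mul ht.ne' hx.ne']
  ring

theorem stmt11_general (α γ : ℝ) (hα0 : 0 < α) (hγ : 0 < γ)
    (L : ℝ → ℝ) (hLpos : ∀ x, 1 ≤ x → 0 < L x)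
    (hLdiff : Differentiable ℝ L)
    (hL' : Tendsto (fun x => deriv L x * x / L x) atTop (nhds 0))
    (Hbar h : ℝ → ℝ)
    (hHbar : ∀ x, 1 ≤ x → Hbar x = Real.exp (-∫ u in (1 : ℝ)..x, 1 / (u ^ (1 - α) * L u)))
    (hh : ∀ x, h x = x ^ (1 - α) * L x)
    (nubar V : ℝ → ℝ)
    (hnu_asym : Tendsto (fun x => nubar x / (γ * Hbar x)) atTop (nhds 1))
    (hVinv : ∀ᶠ x in atTop, 1 / nubar (V x) = x)
    (hVtop : Tendsto V atTop atTop) :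
    ∀ t : ℝ, 0 < t →
      Tendsto (fun x => (V (t * x) - V x) / h (V x)) atTop (nhds (Real.log t)) := by
  intro t ht
  have hhL : h = fun u => u ^ (1 - α) * L u := funext hh
  have hLpos' : ∀ᶠ x in atTop, 0 < L x := eventually_atTop.2 ⟨1, hLpos⟩
  have hpos : ∀ u ∈ Ici (1 : ℝ), 0 < h u := fun u hu =>
    (hh u).symm ▸ mul_pos (rpow_pos_of_pos (zero_lt_one.trans_le hu) _) (hLpos u hu)
  have hcont : ContinuousOn h (Ici 1) := fun u hu => (hhL ▸ (hasDerivAt_rpow_mul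
    (zero_lt_one.trans_le hu) (hLdiff u) (hLpos u hu).ne').continuousAt).continuousWithinAt
  have hflat : ∀ ε : ℝ≥0, 0 < ε → ∀ᶠ X in atTop, LipschitzOnWith ε h (Ici X) :=
    hhL ▸ eventually_lipschitzOnWith_Ici_rpow_mul (by linarith) hLpos' (.of_forall hLdiff) hL'
  have hint : ∀ b ∈ Ici (1 : ℝ), IntervalIntegrable (fun u => (h u)⁻¹) volume 1 b := fun b hb =>
    ((hcont.inv₀ fun u hu => (hpos u hu).ne').mono
      (ordConnected_Ici.uIcc_subset self_mem_Ici hb)).intervalIntegrable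
  have hI : Tendsto (fun x => (∫ u in (1 : ℝ)..V x, (h u)⁻¹) - log x) atTop (𝓝 (log γ)) := by
    refine tendsto_sub_log_of_tendsto_inv_div_mul_exp hγ ((hnu_asym.comp hVtop).congr' ?_)
    filter_upwards [hVinv, hVtop.eventually_ge_atTop 1] with x hx hV
    have hnu : nubar (V x) = x⁻¹ := by rw [← one_div_one_div (nubar (V x)), hx, one_div]
    rw [Function.comp_apply, hnu, hHbar _ hV]
    simp only [hh, one_div]
  have hVt : Tendsto (fun x => V (t * x)) atTop atTop :=
    hVtop.comp (tendsto_id.const_mul_atTop ht)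
  have hD : Tendsto (fun x => ∫ u in V x..V (t * x), (h u)⁻¹) atTop (𝓝 (log t)) := by
    refine (tendsto_sub_comp_mul_of_tendsto_sub_log ht hI).congr' ?_
    filter_upwards [hVtop.eventually_ge_atTop 1, hVt.eventually_ge_atTop 1] with x hV hVt
    exact intervalIntegral.integral_interval_sub_left (hint _ hVt) (hint _ hV)
  exact tendsto_sub_div_of_tendsto_integral_inv (eventually_atTop.2 ⟨1, hpos⟩) hflat hVtop hVt hD

/-- Π-variation of `V`: if `ν̄` is nonincreasing with `ν̄(x) ~ γH̄(x)` for the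
semi-exponential tail `H̄(x) = exp{-∫₁ˣ du/(u^{1-α}L(u))}` and `V` is (eventually)
the inverse of `1/ν̄`, then for every `t > 0`,
`(V(tx) - V(x))/h(V(x)) → log t` as `x → ∞`, with `h(u) = u^{1-α}L(u)`. -/
theorem stmt11 (α γ : ℝ) (hα0 : 0 < α) (hα1 : α < 1) (hγ : 0 < γ)
    (L : ℝ → ℝ) (hLpos : ∀ x, 1 ≤ x → 0 < L x)
    (hLsv : ∀ t : ℝ, 0 < t → Tendsto (fun x => L (t * x) / L x) atTop (nhds 1))
    (hLdiff : Differentiable ℝ L)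
    (hL' : Tendsto (fun x => deriv L x * x / L x) atTop (nhds 0))
    (Hbar h : ℝ → ℝ)
    (hHbar : ∀ x, 1 ≤ x → Hbar x = Real.exp (-∫ u in (1 : ℝ)..x, 1 / (u ^ (1 - α) * L u)))
    (hh : ∀ x, h x = x ^ (1 - α) * L x)
    (nubar V : ℝ → ℝ)
    (hnu_mono : AntitoneOn nubar (Set.Ici 1))
    (hnu_asym : Tendsto (fun x => nubar x / (γ * Hbar x)) atTop (nhds 1))
    (hVinv : ∀ᶠ x in atTop, 1 / nubar (V x) = x)
    (hVtop : Tendsto V atTop atTop) :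
    ∀ t : ℝ, 0 < t →
      Tendsto (fun x => (V (t * x) - V x) / h (V x)) atTop (nhds (Real.log t)) :=
  stmt11_general α γ hα0 hγ L hLpos hLdiff hL' Hbar h hHbar hh nubar V hnu_asym hVinv hVtop
end

section
/- Let q : [0,∞) → [0,∞) be increasing, concave, with q(0) = 0. Fix b > 0 and an integer m ≥ 0, and let y ∈ (mb, (m+1)b]. Then the infimum of Σ_{i=1}^{m+1} q(z_i) over all z₁,...,z_{m+1} ∈ (0, b] with Σ z_i ≥ y equals m·q(b) + q(y - mb), attained at z₁ = ... = z_m = b, z_{m+1} = y - mb. -/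
/-!
Pairs of points can be pushed apart without increasing the sum of `q`: by concavity,
`q x + q y ≤ q u + q v` whenever `x ≤ u, v ≤ y` and `u + v = x + y`. Adding the points `zᵢ`
one at a time, each new point either is absorbed into the remainder `r` (subadditivity, the case
`x = 0`) or completes one more full block `b` (the case `y = b`), so `Σ q(zᵢ) ≥ k q(b) + q(r)`
whenever `Σ zᵢ ≥ k b + r` with `0 ≤ r ≤ b`. Monotonicity handles the slack in `Σ zᵢ ≥ y`.
-/

open Set

theorem ConcaveOn.add_le_add_of_add_eq {s : Set ℝ} {f : ℝ → ℝ} (hf : ConcaveOn ℝ s f)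
    {x y u v : ℝ} (hx : x ∈ s) (hy : y ∈ s) (hu : u ∈ Icc x y) (huv : u + v = x + y) :
    f x + f y ≤ f u + f v := by
  obtain ⟨hxu, huy⟩ := hu
  rcases (hxu.trans huy).eq_or_lt with rfl | hxy
  · obtain rfl : u = x := le_antisymm huy hxu
    obtain rfl : v = u := by linarith
    rfl
  set θ := (y - u) / (y - x) with hθ
  have hyx : 0 < y - x := sub_pos.mpr hxy
  have hθ0 : 0 ≤ θ := div_nonneg (by linarith) hyx.le
  have hθ1 : θ ≤ 1 := (div_le_one hyx).mpr (by linarith)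
  have hu_eq : θ * x + (1 - θ) * y = u := by rw [hθ]; field_simp; ring
  have hv_eq : (1 - θ) * x + θ * y = v := by linarith
  have hfu := hf.2 hx hy hθ0 (sub_nonneg.mpr hθ1) (add_sub_cancel θ 1)
  have hfv := hf.2 hx hy (sub_nonneg.mpr hθ1) hθ0 (sub_add_cancel 1 θ)
  simp only [smul_eq_mul, hu_eq, hv_eq] at hfu hfv
  linarith

theorem ConcaveOn.natCast_mul_add_le_sum {ι : Type*} {q : ℝ → ℝ}
    (hconc : ConcaveOn ℝ (Ici 0) q) (hmono : MonotoneOn q (Ici 0)) (hq0 : q 0 = 0)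
    {b : ℝ} (s : Finset ι) (z : ι → ℝ) (hz : ∀ i ∈ s, z i ∈ Icc 0 b) (k : ℕ) {r : ℝ}
    (hr : r ∈ Icc 0 b) (hsum : k * b + r ≤ ∑ i ∈ s, z i) :
    k * q b + q r ≤ ∑ i ∈ s, q (z i) := by
  obtain ⟨hr0, hrb⟩ := hr
  have hb0 : 0 ≤ b := hr0.trans hrb
  induction s using Finset.cons_induction generalizing k r with
  | empty =>
    have hkb : 0 ≤ (k : ℝ) * b := by positivity
    simp only [Finset.sum_empty] at hsum ⊢
    obtain rfl : r = 0 := by linarith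
    rcases mul_eq_zero.mp (show (k : ℝ) * b = 0 by linarith) with hk | rfl
    · simp [hk, hq0]
    · simp [hq0]
  | cons a s ha ih =>
    obtain ⟨hv0, hvb⟩ := hz a (Finset.mem_cons_self a s)
    have hz' : ∀ i ∈ s, z i ∈ Icc 0 b := fun i hi => hz i (Finset.mem_cons_of_mem hi)
    rw [Finset.sum_cons] at hsum ⊢
    rcases lt_or_ge (z a) r with hvr | hrv
    · have hrest := ih hz' k (r := r - z a) (by linarith) (by linarith) (by linarith)
      have hsub := hconc.add_le_add_of_add_eq self_mem_Ici hr0 ⟨hv0, hvr.le⟩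
        (u := z a) (v := r - z a) (by ring)
      linarith
    · cases k with
      | zero =>
        have hrest := ih hz' 0 (r := 0)
          (by simpa using Finset.sum_nonneg fun i hi => (hz' i hi).1) le_rfl hb0
        have hqr : q r ≤ q (z a) := hmono hr0 hv0 hrv
        simp only [Nat.cast_zero, zero_mul, zero_add, hq0] at hrest ⊢
        linarith
      | succ k =>
        have hrest := ih hz' k (r := r + b - z a) (by push_cast at hsum; linarith)
          (by linarith) (by linarith)
        have hswap := hconc.add_le_add_of_add_eq hr0 hb0 ⟨hrv, hvb⟩
          (u := z a) (v := r + b - z a) (by ring)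
        push_cast
        linarith

/-- For `q` increasing, concave on `[0,∞)` with `q(0) = 0`, `b > 0`, `m ≥ 0`
and `y ∈ (mb, (m+1)b]`, the infimum of `Σ_{i=1}^{m+1} q(z_i)` over
`z₁,...,z_{m+1} ∈ (0,b]` with `Σ z_i ≥ y` equals `m·q(b) + q(y - mb)`, and is
attained (at `z₁ = ⋯ = z_m = b`, `z_{m+1} = y - mb`). -/
theorem stmt16 (q : ℝ → ℝ) (hmono : MonotoneOn q (Set.Ici 0))
    (hconc : ConcaveOn ℝ (Set.Ici 0) q) (hq0 : q 0 = 0)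
    (b : ℝ) (hb : 0 < b) (m : ℕ) (y : ℝ)
    (hy1 : (m : ℝ) * b < y) (hy2 : y ≤ ((m : ℝ) + 1) * b) :
    IsLeast {s : ℝ | ∃ z : Fin (m + 1) → ℝ,
        (∀ i, 0 < z i ∧ z i ≤ b) ∧ y ≤ ∑ i, z i ∧ s = ∑ i, q (z i)}
      ((m : ℝ) * q b + q (y - (m : ℝ) * b)) := by
  set z : Fin (m + 1) → ℝ := Fin.snoc (fun _ => b) (y - m * b)
  have hz_sum (g : ℝ → ℝ) : ∑ i, g (z i) = m * g b + g (y - m * b) := by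
    simp [z, Fin.sum_univ_castSucc]
  have hz_total : ∑ i, z i = m * b + (y - m * b) := hz_sum id
  refine ⟨⟨z, fun i => ?_, by linarith, (hz_sum q).symm⟩, ?_⟩
  · refine Fin.lastCases ?_ (fun j => ?_) i
    · simp only [z, Fin.snoc_last]
      constructor <;> linarith
    · simpa [z] using hb
  · rintro s ⟨w, hw, hsum, rfl⟩
    exact hconc.natCast_mul_add_le_sum hmono hq0 Finset.univ w
      (fun i _ => ⟨(hw i).1.le, (hw i).2⟩) m ⟨by linarith, by linarith⟩ (by linarith)
end
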